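/- arXiv:2505.10005 — 11 statements merged into one kernel-verified Lean document; each statement's English description precedes it below -/
import Mathlib

section
/- There exists a jump game on a finite simple connected 3-regular graph with exactly three empty nodes (|V| = n + 3) and three types of agents that admits an improving response cycle; in particular, such a jump game is not a potential game. -/
open Finset

variable {V : Type*} {A : Type*} {T : Type*}

/-- Utility of agent `i` under assignment `σ`: the number of distinct types,
different from `t i`, among the agents occupying nodes adjacent to `σ i`. -/
noncomputable def util (G : SimpleGraph V) (t : A → T) (σ : A ↪ V) (i : A) : ℕ :=
  {c : T | c ≠ t i ∧ ∃ j : A, G.Adj (σ i) (σ j) ∧ t j = c}.ncard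

/-- Type-count of node `w` under assignment `σ`: the number of distinct types
among the agents occupying nodes adjacent to `w`. -/
noncomputable def tauN (G : SimpleGraph V) (t : A → T) (σ : A ↪ V) (w : V) : ℕ :=
  {c : T | ∃ j : A, G.Adj w (σ j) ∧ t j = c}.ncard

/-- A node is empty under `σ` if no agent occupies it. -/
def IsEmptyNode (σ : A ↪ V) (w : V) : Prop := ∀ i : A, σ i ≠ w

/-- `σ'` is obtained from `σ` by an improving jump of agent `i`. -/
def ImpJump (G : SimpleGraph V) (t : A → T) (σ σ' : A ↪ V) (i : A) : Prop :=
  (∀ j : A, j ≠ i → σ' j = σ j) ∧ IsEmptyNode σ (σ' i) ∧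
    util G t σ i < util G t σ' i

/-- An assignment is an equilibrium if no agent has an improving jump. -/
def IsEquilibrium (G : SimpleGraph V) (t : A → T) (σ : A ↪ V) : Prop :=
  ∀ (σ' : A ↪ V) (i : A), ¬ ImpJump G t σ σ' i

/-- An improving response cycle: `f 0, f 1, …, f m` with `m ≥ 1`, `f m = f 0`,
and each step an improving jump of some agent. -/
def IsIRC (G : SimpleGraph V) (t : A → T) (m : ℕ) (f : ℕ → (A ↪ V)) : Prop :=
  1 ≤ m ∧ f m = f 0 ∧ ∀ ℓ < m, ∃ i : A, ImpJump G t (f ℓ) (f (ℓ + 1)) i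

/-- Social welfare: total utility of the agents. -/
noncomputable def socialWelfare [Fintype A] (G : SimpleGraph V) (t : A → T) (σ : A ↪ V) : ℕ :=
  ∑ i : A, util G t σ i

/-- Number of colorful edges: edges whose endpoints are occupied by agents of
different types. -/
noncomputable def colorfulEdges (G : SimpleGraph V) (t : A → T) (σ : A ↪ V) : ℕ :=
  {e ∈ G.edgeSet | ∃ i j : A, t i ≠ t j ∧ e = s(σ i, σ j)}.ncard

/-- The set of monochromatic edges: edges whose endpoints are occupied by agents
of the same type. -/
def monoEdgeSet (G : SimpleGraph V) (t : A → T) (σ : A ↪ V) : Set (Sym2 V) :=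
  {e ∈ G.edgeSet | ∃ i j : A, i ≠ j ∧ t i = t j ∧ e = s(σ i, σ j)}

/-- Number of monochromatic edges. -/
noncomputable def monoEdges (G : SimpleGraph V) (t : A → T) (σ : A ↪ V) : ℕ :=
  (monoEdgeSet G t σ).ncard

/-- `c(σ)`: the number of empty nodes adjacent to at most one type of agents. -/
noncomputable def emptyLowCount (G : SimpleGraph V) (t : A → T) (σ : A ↪ V) : ℕ :=
  {w : V | IsEmptyNode σ w ∧ tauN G t σ w ≤ 1}.ncard

/-- `TE(σ)`: the total type-count of the empty nodes. -/
noncomputable def totalEmptyTypeCount (G : SimpleGraph V) (t : A → T) (σ : A ↪ V) : ℕ :=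
  ∑ᶠ w ∈ {w : V | IsEmptyNode σ w}, tauN G t σ w

open Classical in
/-- `B(σ)`: 1 if two (distinct) empty nodes are adjacent, 0 otherwise. -/
noncomputable def adjEmptyIndicator (G : SimpleGraph V) (σ : A ↪ V) : ℕ :=
  if ∃ w₁ w₂ : V, IsEmptyNode σ w₁ ∧ IsEmptyNode σ w₂ ∧ G.Adj w₁ w₂ then 1 else 0

/-- `n_T`: the number of agents of type `c`. -/
noncomputable def typeCount (t : A → T) (c : T) : ℕ := {i : A | t i = c}.ncard


/-! ### Auxiliary construction: the Petersen graph example -/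

/-- Adjacency (as a `Bool`) of the Petersen graph on `Fin 10`. -/
def petAdjB : Fin 10 → Fin 10 → Bool :=
  fun a b => decide ((a.val, b.val) ∈ [(0,1),(1,2),(2,3),(3,4),(4,0),(5,7),(7,9),(9,6),(6,8),(8,5),(0,5),(1,6),(2,7),(3,8),(4,9)] ∨
    (b.val, a.val) ∈ [(0,1),(1,2),(2,3),(3,4),(4,0),(5,7),(7,9),(9,6),(6,8),(8,5),(0,5),(1,6),(2,7),(3,8),(4,9)])

/-- The Petersen graph. -/
def petG : SimpleGraph (Fin 10) where
  Adj a b := petAdjB a b = true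
  symm := by
    have h : ∀ a b : Fin 10, petAdjB a b = true → petAdjB b a = true := by decide
    exact ⟨fun a b hab => h a b hab⟩
  loopless := by
    have h : ∀ a : Fin 10, ¬ petAdjB a a = true := by decide
    exact ⟨fun a hab => h a hab⟩

instance : DecidableRel petG.Adj := fun a b => inferInstanceAs (Decidable (petAdjB a b = true))

/-- The types of the seven agents. -/
def petT : Fin 7 → Fin 3 := ![0,0,0,1,1,2,2]

def pe0 : Fin 7 ↪ Fin 10 := ⟨![4,9,8,3,7,2,6], by decide⟩
def pe1 : Fin 7 ↪ Fin 10 := ⟨![4,9,8,3,7,5,6], by decide⟩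
def pe2 : Fin 7 ↪ Fin 10 := ⟨![4,9,8,0,7,5,6], by decide⟩
def pe3 : Fin 7 ↪ Fin 10 := ⟨![4,9,1,0,7,5,6], by decide⟩
def pe4 : Fin 7 ↪ Fin 10 := ⟨![4,9,1,0,7,2,6], by decide⟩
def pe5 : Fin 7 ↪ Fin 10 := ⟨![4,9,1,3,7,2,6], by decide⟩

/-- The cyclic sequence of assignments. -/
def petSeq : ℕ → (Fin 7 ↪ Fin 10)
  | 0 => pe0 | 1 => pe1 | 2 => pe2 | 3 => pe3 | 4 => pe4 | 5 => pe5 | _ => pe0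

/-- The improving response cycle. -/
def petF : ℕ → (Fin 7 ↪ Fin 10) := fun ℓ => petSeq (ℓ % 6)

lemma util_eq_card {V A : Type*} [Fintype A] (G : SimpleGraph V) [DecidableRel G.Adj]
    (t : A → Fin 3) (σ : A ↪ V) (i : A) :
    util G t σ i =
      (Finset.univ.filter (fun c : Fin 3 => c ≠ t i ∧ ∃ j : A, G.Adj (σ i) (σ j) ∧ t j = c)).card := by
  rw [util, ← Set.ncard_coe_finset]
  congr 1
  ext c
  simp

lemma petStep0 : ImpJump petG petT pe0 pe1 5 :=
  ⟨by decide, fun k => by fin_cases k <;> decide, by rw [util_eq_card, util_eq_card]; decide⟩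
lemma petStep1 : ImpJump petG petT pe1 pe2 3 :=
  ⟨by decide, fun k => by fin_cases k <;> decide, by rw [util_eq_card, util_eq_card]; decide⟩
lemma petStep2 : ImpJump petG petT pe2 pe3 2 :=
  ⟨by decide, fun k => by fin_cases k <;> decide, by rw [util_eq_card, util_eq_card]; decide⟩
lemma petStep3 : ImpJump petG petT pe3 pe4 5 :=
  ⟨by decide, fun k => by fin_cases k <;> decide, by rw [util_eq_card, util_eq_card]; decide⟩
lemma petStep4 : ImpJump petG petT pe4 pe5 3 :=
  ⟨by decide, fun k => by fin_cases k <;> decide, by rw [util_eq_card, util_eq_card]; decide⟩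
lemma petStep5 : ImpJump petG petT pe5 pe0 2 :=
  ⟨by decide, fun k => by fin_cases k <;> decide, by rw [util_eq_card, util_eq_card]; decide⟩

lemma petIRC : IsIRC petG petT 6 petF := by
  refine ⟨by norm_num, rfl, ?_⟩
  intro ℓ hℓ
  interval_cases ℓ
  · exact ⟨5, petStep0⟩
  · exact ⟨3, petStep1⟩
  · exact ⟨2, petStep2⟩
  · exact ⟨5, petStep3⟩
  · exact ⟨3, petStep4⟩
  · exact ⟨2, petStep5⟩

lemma no_potential_of_IRC {V A T : Type*} (G : SimpleGraph V) (t : A → T)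
    {m : ℕ} {f : ℕ → (A ↪ V)} (h : IsIRC G t m f) :
    ¬ ∃ Φ : (A ↪ V) → ℝ, ∀ (σ σ' : A ↪ V) (i : A), ImpJump G t σ σ' i → Φ σ < Φ σ' := by
  rintro ⟨Φ, hΦ⟩
  obtain ⟨hm, hfm, hstep⟩ := h
  have mono : ∀ ℓ, ℓ ≤ m → 1 ≤ ℓ → Φ (f 0) < Φ (f ℓ) := by
    intro ℓ hℓ h1
    induction ℓ with
    | zero => omega
    | succ k ih =>
      obtain ⟨i, hi⟩ := hstep k (by omega)
      rcases Nat.eq_zero_or_pos k with hk | hk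
      · subst hk; exact hΦ _ _ _ hi
      · exact (ih (by omega) hk).trans (hΦ _ _ _ hi)
  have := mono m le_rfl hm
  rw [hfm] at this
  exact lt_irrefl _ this


/-- There exists a jump game on a finite simple connected 3-regular
graph with exactly three empty nodes and three types of agents that admits an
improving response cycle; in particular, it is not a potential game. -/
theorem stmt_0 :
    ∃ (n : ℕ) (G : SimpleGraph (Fin (n + 3))) (t : Fin n → Fin 3)
      (m : ℕ) (f : ℕ → (Fin n ↪ Fin (n + 3))),
      2 ≤ n ∧ G.Connected ∧ (∀ w : Fin (n + 3), (G.neighborSet w).ncard = 3) ∧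
      Function.Surjective t ∧
      IsIRC G t m f ∧
      ¬ ∃ Φ : (Fin n ↪ Fin (n + 3)) → ℝ,
          ∀ (σ σ' : Fin n ↪ Fin (n + 3)) (i : Fin n),
            ImpJump G t σ σ' i → Φ σ < Φ σ' := by
  refine ⟨7, petG, petT, 6, petF, by norm_num, ?_, ?_, ?_, petIRC,
    no_potential_of_IRC petG petT petIRC⟩
  · have r : ∀ a b : Fin 10, petG.Adj a b → petG.Reachable a b := fun a b h => h.reachable
    have h0 : ∀ v : Fin 10, petG.Reachable 0 v := by
      intro v
      have a01 : petG.Reachable 0 1 := r _ _ (by decide)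
      have a12 : petG.Reachable 1 2 := r _ _ (by decide)
      have a23 : petG.Reachable 2 3 := r _ _ (by decide)
      have a04 : petG.Reachable 0 4 := r _ _ (by decide)
      have a05 : petG.Reachable 0 5 := r _ _ (by decide)
      have a16 : petG.Reachable 1 6 := r _ _ (by decide)
      have a27 : petG.Reachable 2 7 := r _ _ (by decide)
      have a38 : petG.Reachable 3 8 := r _ _ (by decide)
      have a49 : petG.Reachable 4 9 := r _ _ (by decide)
      fin_cases v
      · rfl
      · exact a01
      · exact a01.trans a12
      · exact (a01.trans a12).trans a23
      · exact a04
      · exact a05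
      · exact a01.trans a16
      · exact (a01.trans a12).trans a27
      · exact ((a01.trans a12).trans a23).trans a38
      · exact a04.trans a49
    exact ⟨fun u v => (h0 u).symm.trans (h0 v)⟩
  · intro w
    rw [Set.ncard_eq_toFinset_card']
    have h : (petG.neighborSet w).toFinset = petG.neighborFinset w := by
      simp [SimpleGraph.neighborFinset]
    rw [h, ← SimpleGraph.degree]
    revert w; decide
  · intro c
    fin_cases c
    · exact ⟨0, rfl⟩
    · exact ⟨3, rfl⟩
    · exact ⟨5, rfl⟩
end

section
/- In a jump game with exactly k = 2 types of agents, every improving jump strictly increases the social welfare: if assignment v' is obtained from assignment v by an improving jump of some agent, then SW(v') > SW(v). Consequently the social welfare is an ordinal potential function, the game admits no improving response cycle, and an equilibrium assignment exists. -/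
open Finset

variable {V : Type*} {A : Type*} {T : Type*}

lemma my_util_le_one [Fintype T] (G : SimpleGraph V) (t : A → T)
    (hk : Fintype.card T = 2) (σ : A ↪ V) (i : A) : util G t σ i ≤ 1 := by
  classical
  rw [util, Set.ncard_le_one (Set.toFinite _)]
  rintro a ⟨ha, -⟩ b ⟨hb, -⟩
  by_contra hab
  have h3 : ({a, b, t i} : Finset T).card = 3 := by
    rw [Finset.card_insert_of_notMem (by simp [hab, ha]),
      Finset.card_insert_of_notMem (by simp [hb]), Finset.card_singleton]
  have : 3 ≤ Fintype.card T :=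
    h3 ▸ (Finset.card_le_card (Finset.subset_univ _)).trans_eq Finset.card_univ
  omega

lemma my_util_mono [Fintype T] (G : SimpleGraph V) (t : A → T)
    (hk : Fintype.card T = 2) {σ σ' : A ↪ V} {i : A} (h : ImpJump G t σ σ' i)
    {j : A} (hj : j ≠ i) : util G t σ j ≤ util G t σ' j := by
  have h0 : util G t σ i = 0 := by
    have h1 := my_util_le_one G t hk σ' i
    have h2 := h.2.2
    omega
  have hempty : {c : T | c ≠ t i ∧ ∃ j' : A, G.Adj (σ i) (σ j') ∧ t j' = c} = ∅ :=
    (Set.ncard_eq_zero (Set.toFinite _)).mp h0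
  apply Set.ncard_le_ncard _ (Set.toFinite _)
  rintro c ⟨hc, j', hadj, hcj'⟩
  refine ⟨hc, j', ?_, hcj'⟩
  rw [h.1 j hj]
  by_cases hj' : j' = i
  · exfalso
    have hmem : t j ∈ {c : T | c ≠ t i ∧ ∃ j'' : A, G.Adj (σ i) (σ j'') ∧ t j'' = c} := by
      refine ⟨fun h' => hc ?_, j, (hj' ▸ hadj).symm, rfl⟩
      rw [← hcj', hj', ← h']
    rw [hempty] at hmem
    exact hmem
  · rw [h.1 j' hj']
    exact hadj

/-- With k = 2 types, every improving jump strictly increases the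
social welfare; hence the social welfare is an ordinal potential, there is no
improving response cycle, and an equilibrium exists. -/
theorem stmt_1 {V A T : Type*} [Fintype V] [Fintype A] [Fintype T]
    (G : SimpleGraph V) (hG : G.Connected)
    (hA : 2 ≤ Fintype.card A) (hVA : Fintype.card A < Fintype.card V)
    (t : A → T) (ht : Function.Surjective t) (hk : Fintype.card T = 2) :
    (∀ (σ σ' : A ↪ V) (i : A), ImpJump G t σ σ' i →
        socialWelfare G t σ < socialWelfare G t σ') ∧
    (¬ ∃ (m : ℕ) (f : ℕ → (A ↪ V)), IsIRC G t m f) ∧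
    (∃ σ : A ↪ V, IsEquilibrium G t σ) := by
  have part1 : ∀ (σ σ' : A ↪ V) (i : A), ImpJump G t σ σ' i →
      socialWelfare G t σ < socialWelfare G t σ' := by
    intro σ σ' i h
    apply Finset.sum_lt_sum (fun j _ => ?_) ⟨i, Finset.mem_univ i, h.2.2⟩
    by_cases hj : j = i
    · subst hj; exact le_of_lt h.2.2
    · exact my_util_mono G t hk h hj
  refine ⟨part1, ?_, ?_⟩
  · rintro ⟨m, f, h1m, hfm, hstep⟩
    have key : ∀ ℓ, ℓ ≤ m → socialWelfare G t (f 0) + ℓ ≤ socialWelfare G t (f ℓ) := by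
      intro ℓ
      induction ℓ with
      | zero => simp
      | succ n ih =>
        intro hn
        obtain ⟨i, hi⟩ := hstep n (by omega)
        have := part1 _ _ _ hi
        have := ih (by omega)
        omega
    have := key m le_rfl
    rw [hfm] at this
    omega
  · have hne : Nonempty (A ↪ V) := Function.Embedding.nonempty_of_card_le (le_of_lt hVA)
    obtain ⟨σ, hσ⟩ := Finite.exists_max (fun σ : A ↪ V => socialWelfare G t σ)
    refine ⟨σ, fun σ' i h => ?_⟩
    have := part1 σ σ' i h
    have := hσ σ'
    omega
end

section
/- In a jump game whose graph contains exactly one empty node (that is, |V| = n + 1), there is no improving response cycle; consequently the game is a potential game and an equilibrium assignment exists. -/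
open Finset

variable {V : Type*} {A : Type*} {T : Type*}

/-! ### Auxiliary material for `stmt_2` -/

open Classical in
/-- The (unique, when `|V| = n+1`) empty node of an assignment. -/
noncomputable def jgEmpty {V A : Type*} [Nonempty V] (σ : A ↪ V) : V :=
  if h : ∃ w, ∀ i, σ i ≠ w then h.choose else Classical.arbitrary V

lemma jgExistsEmpty {V A : Type*} [Fintype V] [Fintype A]
    (hVA : Fintype.card A < Fintype.card V) (σ : A ↪ V) : ∃ w, ∀ i : A, σ i ≠ w := by
  by_contra h
  push_neg at h
  have hsurj : Function.Surjective σ := fun w => h w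
  have := Fintype.card_le_of_surjective σ hsurj
  omega

lemma jgEmpty_isEmpty {V A : Type*} [Fintype V] [Fintype A] [Nonempty V]
    (hVA : Fintype.card A < Fintype.card V) (σ : A ↪ V) : ∀ i : A, σ i ≠ jgEmpty σ := by
  have h := jgExistsEmpty hVA σ
  rw [jgEmpty, dif_pos h]
  exact h.choose_spec

lemma jgEmpty_unique {V A : Type*} [Fintype V] [Fintype A]
    (hVA : Fintype.card V = Fintype.card A + 1) (σ : A ↪ V) {w w' : V}
    (hw : ∀ i : A, σ i ≠ w) (hw' : ∀ i : A, σ i ≠ w') : w = w' := by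
  classical
  set s : Finset V := Finset.univ.image σ with hs
  have hcard : s.card = Fintype.card A := by
    rw [hs, Finset.card_image_of_injective _ σ.injective, Finset.card_univ]
  have hcompl : sᶜ.card = 1 := by
    rw [Finset.card_compl, hcard, hVA]; omega
  have hwmem : w ∈ sᶜ := by
    simp only [Finset.mem_compl, hs, Finset.mem_image, Finset.mem_univ, true_and]
    rintro ⟨i, hi⟩; exact hw i hi
  have hwmem' : w' ∈ sᶜ := by
    simp only [Finset.mem_compl, hs, Finset.mem_image, Finset.mem_univ, true_and]
    rintro ⟨i, hi⟩; exact hw' i hi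
  exact Finset.card_le_one.mp (le_of_eq hcompl) _ hwmem _ hwmem'

/-- Key step lemma: an improving jump never increases the type-count of the
empty node, and in case of a tie it strictly decreases the number of
monochromatic edges. -/
lemma jgKey {V A T : Type*} [Fintype V] [Fintype A] [Fintype T]
    (G : SimpleGraph V) (hVA : Fintype.card V = Fintype.card A + 1)
    (t : A → T) (σ σ' : A ↪ V) (i : A) (h : ImpJump G t σ σ' i) :
    tauN G t σ' (σ i) < tauN G t σ (σ' i) ∨
      (tauN G t σ' (σ i) = tauN G t σ (σ' i) ∧ monoEdges G t σ' < monoEdges G t σ) := by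
  classical
  obtain ⟨hfix, hemp, hutil⟩ := h
  set a : V := σ i with ha
  set e : V := σ' i with he
  set Sa : Set T := {c | c ≠ t i ∧ ∃ j, G.Adj a (σ j) ∧ t j = c} with hSa
  set S' : Set T := {c | c ≠ t i ∧ ∃ j, G.Adj e (σ' j) ∧ t j = c} with hS'
  set Te : Set T := {c | ∃ j, G.Adj e (σ j) ∧ t j = c} with hTe
  set Ta' : Set T := {c | ∃ j, G.Adj a (σ' j) ∧ t j = c} with hTa'
  have hU : util G t σ i = Sa.ncard := rfl
  have hU' : util G t σ' i = S'.ncard := rfl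
  have hτe : tauN G t σ e = Te.ncard := rfl
  have hτa : tauN G t σ' a = Ta'.ncard := rfl
  -- S' ⊆ Te
  have hsub1 : S' ⊆ Te := by
    rintro c ⟨hc, j, hadj, hj⟩
    have hji : j ≠ i := by
      rintro rfl
      rw [← he] at hadj
      exact G.irrefl hadj
    rw [hfix j hji] at hadj
    exact ⟨j, hadj, hj⟩
  -- Ta' ⊆ insert (t i) Sa
  have hsub2 : Ta' ⊆ insert (t i) Sa := by
    rintro c ⟨j, hadj, hj⟩
    by_cases hc : c = t i
    · exact Or.inl hc
    · have hji : j ≠ i := by rintro rfl; exact hc hj.symm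
      rw [hfix j hji] at hadj
      exact Or.inr ⟨hc, j, hadj, hj⟩
  have hc1 : Ta'.ncard ≤ (insert (t i) Sa).ncard :=
    Set.ncard_le_ncard hsub2 (Set.toFinite _)
  have hc2 : (insert (t i) Sa).ncard ≤ Sa.ncard + 1 := Set.ncard_insert_le _ _
  have hc3 : S'.ncard ≤ Te.ncard := Set.ncard_le_ncard hsub1 (Set.toFinite _)
  have hle : tauN G t σ' a ≤ tauN G t σ e := by
    rw [hτa, hτe]
    rw [hU, hU'] at hutil
    omega
  rcases lt_or_eq_of_le hle with hlt | heq
  · exact Or.inl hlt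
  · -- tie case
    refine Or.inr ⟨heq, ?_⟩
    rw [hτa, hτe] at heq
    rw [hU, hU'] at hutil
    -- all inequalities in the chain are equalities
    have hTeS' : S' = Te := by
      apply Set.eq_of_subset_of_ncard_le hsub1 _ (Set.toFinite _)
      omega
    have hTa'eq : Ta' = insert (t i) Sa := by
      apply Set.eq_of_subset_of_ncard_le hsub2 _ (Set.toFinite _)
      have : (insert (t i) Sa).ncard ≤ Sa.ncard + 1 := hc2
      omega
    -- no agent of type `t i` occupies a neighbour of `e`
    have hno : ∀ j : A, ¬ (G.Adj e (σ j) ∧ t j = t i) := by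
      intro j hj
      have : t i ∈ Te := ⟨j, hj.1, hj.2⟩
      rw [← hTeS'] at this
      exact this.1 rfl
    -- some agent `j₀ ≠ i` of type `t i` occupies a neighbour of `a`
    have hti : t i ∈ Ta' := by rw [hTa'eq]; exact Or.inl rfl
    obtain ⟨j₀, hadj₀, hj₀⟩ := hti
    have hj₀i : j₀ ≠ i := by
      intro hji
      rw [hji, ← he] at hadj₀
      rw [ha] at hadj₀
      exact hno i ⟨hadj₀.symm, rfl⟩
    rw [hfix j₀ hj₀i] at hadj₀
    -- nodes of σ' never sit on `a`
    have hnota : ∀ l : A, σ' l ≠ a := by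
      intro l
      by_cases hl : l = i
      · rw [hl, ← he]
        intro hcontra
        rw [ha] at hcontra
        exact hemp i hcontra.symm
      · rw [hfix l hl, ha]
        intro hcontra
        exact hl (σ.injective hcontra)
    -- monoEdgeSet σ' ⊂ monoEdgeSet σ
    have hss : monoEdgeSet G t σ' ⊂ monoEdgeSet G t σ := by
      constructor
      · rintro ε ⟨hεE, j, k, hjk, htjk, rfl⟩
        have hjne : j ≠ i := by
          intro hji
          rw [hji, ← he] at hεE
          rw [hji] at htjk
          have hadj : G.Adj e (σ' k) := G.mem_edgeSet.mp hεE
          have hki : k ≠ i := fun hc => hjk (hji.trans hc.symm)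
          rw [hfix k hki] at hadj
          exact hno k ⟨hadj, htjk.symm⟩
        have hkne : k ≠ i := by
          intro hki
          rw [hki, ← he] at hεE
          rw [hki] at htjk
          have hadj : G.Adj (σ' j) e := G.mem_edgeSet.mp hεE
          rw [hfix j hjne] at hadj
          exact hno j ⟨hadj.symm, htjk⟩
        refine ⟨hεE, j, k, hjk, htjk, ?_⟩
        rw [hfix j hjne, hfix k hkne]
      · intro hsup
        have hmem : s(a, σ j₀) ∈ monoEdgeSet G t σ := by
          refine ⟨G.mem_edgeSet.mpr hadj₀, i, j₀, fun hc => hj₀i hc.symm,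
            hj₀.symm, ?_⟩
          rw [ha]
        have hmem' := hsup hmem
        obtain ⟨_, j, k, hjk, htjk, hε⟩ := hmem'
        rw [Sym2.eq_iff] at hε
        rcases hε with ⟨h1, _⟩ | ⟨h1, _⟩
        · exact hnota j h1.symm
        · exact hnota k h1.symm
    exact Set.ncard_lt_ncard hss (Set.toFinite _)

/-- The (decreasing) combined potential. -/
noncomputable def jgPot {V A T : Type*} [Fintype V] [Fintype A] [Nonempty V]
    (G : SimpleGraph V) (t : A → T) (σ : A ↪ V) : ℕ :=
  (Nat.card (Sym2 V) + 1) * tauN G t σ (jgEmpty σ) + monoEdges G t σ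

lemma jgMonoLe {V A T : Type*} [Fintype V] (G : SimpleGraph V) (t : A → T) (σ : A ↪ V) :
    monoEdges G t σ ≤ Nat.card (Sym2 V) := by
  rw [monoEdges, ← Set.ncard_univ]
  exact Set.ncard_le_ncard (Set.subset_univ _) Set.finite_univ

lemma jgPot_lt {V A T : Type*} [Fintype V] [Fintype A] [Fintype T] [Nonempty V]
    (G : SimpleGraph V) (hVA : Fintype.card V = Fintype.card A + 1)
    (t : A → T) (σ σ' : A ↪ V) (i : A) (h : ImpJump G t σ σ' i) :
    jgPot G t σ' < jgPot G t σ := by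
  have hlt : Fintype.card A < Fintype.card V := by omega
  have hE1 : jgEmpty σ = σ' i := by
    refine jgEmpty_unique hVA σ ?_ ?_
    · exact jgEmpty_isEmpty hlt σ
    · exact h.2.1
  have hE2 : jgEmpty σ' = σ i := by
    refine jgEmpty_unique hVA σ' ?_ ?_
    · exact jgEmpty_isEmpty hlt σ'
    · intro l
      by_cases hl : l = i
      · rw [hl]
        intro hc
        exact h.2.1 i hc.symm
      · rw [h.1 l hl]
        intro hc
        exact hl (σ.injective hc)
  have hkey := jgKey G hVA t σ σ' i h
  set M := Nat.card (Sym2 V) with hM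
  have hm' : monoEdges G t σ' ≤ M := jgMonoLe G t σ'
  rw [jgPot, jgPot, hE1, hE2]
  rcases hkey with hlt' | ⟨heq, hmono⟩
  · calc (M + 1) * tauN G t σ' (σ i) + monoEdges G t σ'
        ≤ (M + 1) * tauN G t σ' (σ i) + M := by omega
      _ < (M + 1) * (tauN G t σ' (σ i) + 1) := by ring_nf; omega
      _ ≤ (M + 1) * tauN G t σ (σ' i) := by
          apply Nat.mul_le_mul_left
          omega
      _ ≤ (M + 1) * tauN G t σ (σ' i) + monoEdges G t σ := Nat.le_add_right _ _
  · rw [heq]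
    omega

/-- With exactly one empty node (|V| = n + 1) there is no improving
response cycle; consequently the game is a potential game and an equilibrium
assignment exists. -/
theorem stmt_2 {V A T : Type*} [Fintype V] [Fintype A] [Fintype T]
    (G : SimpleGraph V) (hG : G.Connected)
    (hA : 2 ≤ Fintype.card A) (hVA : Fintype.card V = Fintype.card A + 1)
    (t : A → T) (ht : Function.Surjective t) (hT : 2 ≤ Fintype.card T) :
    (¬ ∃ (m : ℕ) (f : ℕ → (A ↪ V)), IsIRC G t m f) ∧
    (∃ Φ : (A ↪ V) → ℝ, ∀ (σ σ' : A ↪ V) (i : A),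
        ImpJump G t σ σ' i → Φ σ < Φ σ') ∧
    (∃ σ : A ↪ V, IsEquilibrium G t σ) := by
  classical
  have hNV : Nonempty V := Fintype.card_pos_iff.mp (by omega)
  have hstep : ∀ (σ σ' : A ↪ V) (i : A), ImpJump G t σ σ' i →
      jgPot G t σ' < jgPot G t σ := fun σ σ' i h => jgPot_lt G hVA t σ σ' i h
  refine ⟨?_, ?_, ?_⟩
  · rintro ⟨m, f, hm, hcyc, hIRC⟩
    have H : ∀ ℓ, ℓ ≤ m → jgPot G t (f ℓ) + ℓ ≤ jgPot G t (f 0) := by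
      intro ℓ
      induction ℓ with
      | zero => intro _; omega
      | succ n ih =>
        intro hn
        obtain ⟨i, hij⟩ := hIRC n (by omega)
        have h1 := hstep (f n) (f (n + 1)) i hij
        have h2 := ih (by omega)
        omega
    have := H m le_rfl
    rw [hcyc] at this
    omega
  · refine ⟨fun σ => -(jgPot G t σ : ℝ), fun σ σ' i h => ?_⟩
    have := hstep σ σ' i h
    have h2 : (jgPot G t σ' : ℝ) < jgPot G t σ := by exact_mod_cast this
    exact neg_lt_neg h2
  · have : Nonempty (A ↪ V) := Function.Embedding.nonempty_of_card_le (by omega)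
    obtain ⟨σ, hσ⟩ := Finite.exists_min (jgPot G t (A := A) (V := V))
    refine ⟨σ, fun σ' i h => ?_⟩
    have h1 := hstep σ σ' i h
    have h2 := hσ σ'
    omega
end

section
/- In a jump game whose graph has maximum degree at most 2, the function Φ(v) = 2·CE(v) + c(v) is an ordinal potential function: if assignment v' is obtained from assignment v by an improving jump of some agent, then Φ(v') > Φ(v). Consequently the game admits no improving response cycle and an equilibrium assignment exists. -/
open Finset

variable {V : Type*} {A : Type*} {T : Type*}

section Aux

private lemma ncard_le_of_rel {α β : Type*} {s : Set α} {t : Set β}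
    (ht : t.Finite) (R : α → β → Prop)
    (hex : ∀ a ∈ s, ∃ b ∈ t, R a b)
    (hinj : ∀ a₁ ∈ s, ∀ a₂ ∈ s, ∀ b, R a₁ b → R a₂ b → a₁ = a₂) :
    s.ncard ≤ t.ncard := by
  classical
  rcases s.eq_empty_or_nonempty with h | ⟨a₀, ha₀⟩
  · simp [h]
  · obtain ⟨b₀, hb₀, -⟩ := hex a₀ ha₀
    refine Set.ncard_le_ncard_of_injOn
      (fun a => if h : ∃ b ∈ t, R a b then h.choose else b₀) ?_ ?_ ht
    · intro a ha
      rw [dif_pos (hex a ha)]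
      exact (hex a ha).choose_spec.1
    · intro a₁ h₁ a₂ h₂ hfe
      simp only at hfe
      rw [dif_pos (hex a₁ h₁), dif_pos (hex a₂ h₂)] at hfe
      exact hinj a₁ h₁ a₂ h₂ _ (hex a₁ h₁).choose_spec.2
        (hfe ▸ (hex a₂ h₂).choose_spec.2)

private lemma not_three_distinct {α : Type*} {s : Set α} (hfin : s.Finite)
    (hs : s.ncard ≤ 2) {x y z : α} (hx : x ∈ s) (hy : y ∈ s) (hz : z ∈ s)
    (hxy : x ≠ y) (hxz : x ≠ z) (hyz : y ≠ z) : False := by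
  have hsub : ({x, y, z} : Set α) ⊆ s := by
    intro w hw
    rcases hw with h | h | h <;> subst h <;> assumption
  have h3 : ({x, y, z} : Set α).ncard = 3 := by
    rw [Set.ncard_insert_of_notMem (by simp [hxy, hxz])
        ((Set.finite_singleton z).insert y),
      Set.ncard_insert_of_notMem (by simp [hyz]) (Set.finite_singleton z),
      Set.ncard_singleton]
  have := Set.ncard_le_ncard hsub hfin
  omega

private lemma potential_increase {V A T : Type*} [Fintype V] [Fintype A] [Fintype T]
    (G : SimpleGraph V)
    (hdeg : ∀ w : V, (G.neighborSet w).ncard ≤ 2)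
    (t : A → T) (σ σ' : A ↪ V) (i : A) (h : ImpJump G t σ σ' i) :
    2 * colorfulEdges G t σ + emptyLowCount G t σ <
      2 * colorfulEdges G t σ' + emptyLowCount G t σ' := by
  classical
  obtain ⟨hfix, hemp, hutil⟩ := h
  set a := σ i with ha
  set b := σ' i with hb
  have hab : a ≠ b := hemp i
  -- basic occupancy facts
  have haemp' : ∀ j : A, σ' j ≠ a := by
    intro j hj
    by_cases hji : j = i
    · subst hji; exact hab hj.symm
    · exact hji (σ.injective (by rw [← hfix j hji, hj]))
  -- colorful edge sets
  set CSo : Set (Sym2 V) := {e | e ∈ G.edgeSet ∧ ∃ p q : A, t p ≠ t q ∧ e = s(σ p, σ q)}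
    with hCSo
  set CSn : Set (Sym2 V) := {e | e ∈ G.edgeSet ∧ ∃ p q : A, t p ≠ t q ∧ e = s(σ' p, σ' q)}
    with hCSn
  set Ea : Set (Sym2 V) := {e | e ∈ CSo ∧ a ∈ e} with hEa
  set Eb : Set (Sym2 V) := {e | e ∈ CSn ∧ b ∈ e} with hEb
  -- witness extraction for Ea and Eb
  have hEa_wit : ∀ e ∈ Ea, ∃ j : A, j ≠ i ∧ t j ≠ t i ∧ G.Adj a (σ j) ∧ e = s(a, σ j) := by
    rintro e ⟨⟨hedge, p, q, hpq, rfl⟩, hae⟩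
    rcases Sym2.mem_iff.mp hae with h1 | h1
    · have hpi : p = i := σ.injective (by rw [← h1, ha])
      have htp : t p = t i := by rw [hpi]
      have htq : t q ≠ t i := fun hc => hpq (htp.trans hc.symm)
      refine ⟨q, fun hq => htq (by rw [hq]), htq, ?_, by rw [← h1]⟩
      rw [← h1] at hedge
      exact G.mem_edgeSet.mp hedge
    · have hqi : q = i := σ.injective (by rw [← h1, ha])
      have htq : t q = t i := by rw [hqi]
      have htp : t p ≠ t i := fun hc => hpq (hc.trans htq.symm)
      refine ⟨p, fun hp => htp (by rw [hp]), htp, ?_, ?_⟩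
      · rw [← h1] at hedge
        exact (G.mem_edgeSet.mp hedge).symm
      · rw [← h1]
        exact Sym2.eq_swap
  have hEb_wit : ∀ e ∈ Eb, ∃ j : A, j ≠ i ∧ t j ≠ t i ∧ G.Adj b (σ' j) ∧ e = s(b, σ' j) := by
    rintro e ⟨⟨hedge, p, q, hpq, rfl⟩, hbe⟩
    rcases Sym2.mem_iff.mp hbe with h1 | h1
    · have hpi : p = i := σ'.injective (by rw [← h1, hb])
      have htp : t p = t i := by rw [hpi]
      have htq : t q ≠ t i := fun hc => hpq (htp.trans hc.symm)
      refine ⟨q, fun hq => htq (by rw [hq]), htq, ?_, by rw [← h1]⟩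
      rw [← h1] at hedge
      exact G.mem_edgeSet.mp hedge
    · have hqi : q = i := σ'.injective (by rw [← h1, hb])
      have htq : t q = t i := by rw [hqi]
      have htp : t p ≠ t i := fun hc => hpq (hc.trans htq.symm)
      refine ⟨p, fun hp => htp (by rw [hp]), htp, ?_, ?_⟩
      · rw [← h1] at hedge
        exact (G.mem_edgeSet.mp hedge).symm
      · rw [← h1]
        exact Sym2.eq_swap
  -- the unchanged part of the colorful edges
  have hK : CSo \ Ea = CSn \ Eb := by
    ext e
    constructor
    · rintro ⟨he, hne⟩
      have hnae : a ∉ e := fun hae => hne ⟨he, hae⟩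
      obtain ⟨hedge, p, q, hpq, hpqe⟩ := he
      have hpi : p ≠ i := by
        rintro rfl
        exact hnae (hpqe ▸ Sym2.mem_iff.mpr (Or.inl rfl))
      have hqi : q ≠ i := by
        rintro rfl
        exact hnae (hpqe ▸ Sym2.mem_iff.mpr (Or.inr rfl))
      have he' : e ∈ CSn := ⟨hedge, p, q, hpq, by rw [hpqe, hfix p hpi, hfix q hqi]⟩
      refine ⟨he', fun hbe => ?_⟩
      rcases Sym2.mem_iff.mp (hpqe ▸ hbe.2) with h1 | h1
      · exact hemp p h1.symm
      · exact hemp q h1.symm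
    · rintro ⟨he, hne⟩
      have hnbe : b ∉ e := fun hbe => hne ⟨he, hbe⟩
      obtain ⟨hedge, p, q, hpq, hpqe⟩ := he
      have hpi : p ≠ i := by
        rintro rfl
        exact hnbe (hpqe ▸ Sym2.mem_iff.mpr (Or.inl rfl))
      have hqi : q ≠ i := by
        rintro rfl
        exact hnbe (hpqe ▸ Sym2.mem_iff.mpr (Or.inr rfl))
      have he' : e ∈ CSo := ⟨hedge, p, q, hpq, by rw [hpqe, ← hfix p hpi, ← hfix q hqi]⟩
      refine ⟨he', fun hae => ?_⟩
      rcases Sym2.mem_iff.mp (hpqe ▸ hae.2) with h1 | h1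
      · exact haemp' p h1.symm
      · exact haemp' q h1.symm
  have hCEo : (CSo \ Ea).ncard + Ea.ncard = colorfulEdges G t σ :=
    Set.ncard_diff_add_ncard_of_subset (fun e he => he.1) (Set.toFinite _)
  have hCEn : (CSo \ Ea).ncard + Eb.ncard = colorfulEdges G t σ' := by
    rw [hK]
    exact Set.ncard_diff_add_ncard_of_subset (fun e he => he.1) (Set.toFinite _)
  -- low empty node sets
  set ELo : Set V := {w | IsEmptyNode σ w ∧ tauN G t σ w ≤ 1} with hELo
  set ELn : Set V := {w | IsEmptyNode σ' w ∧ tauN G t σ' w ≤ 1} with hELn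
  have hco : (ELo \ ELn).ncard + (ELo ∩ ELn).ncard = emptyLowCount G t σ := by
    have : ELo \ (ELo ∩ ELn) = ELo \ ELn := Set.diff_self_inter
    rw [← this]
    exact Set.ncard_diff_add_ncard_of_subset Set.inter_subset_left (Set.toFinite _)
  have hcn : (ELn \ ELo).ncard + (ELo ∩ ELn).ncard = emptyLowCount G t σ' := by
    have h1 : ELn \ (ELn ∩ ELo) = ELn \ ELo := Set.diff_self_inter
    rw [Set.inter_comm, ← h1]
    exact Set.ncard_diff_add_ncard_of_subset Set.inter_subset_left (Set.toFinite _)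
  -- reduce to the local inequality
  suffices hloc : 2 * Ea.ncard + (ELo \ ELn).ncard < 2 * Eb.ncard + (ELn \ ELo).ncard by
    omega
  -- general bounds
  have hu'Eb : util G t σ' i ≤ Eb.ncard := by
    refine ncard_le_of_rel (Set.toFinite _)
      (fun c e => ∃ j : A, t j = c ∧ e = s(b, σ' j)) ?_ ?_
    · rintro c ⟨hc, j, hadj, rfl⟩
      refine ⟨s(b, σ' j), ⟨⟨G.mem_edgeSet.mpr hadj, i, j,
        fun hc' => hc hc'.symm, by rw [hb]⟩, Sym2.mem_iff.mpr (Or.inl rfl)⟩, j, rfl, rfl⟩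
    · rintro c₁ hc₁ c₂ hc₂ e ⟨j₁, ht₁, rfl⟩ ⟨j₂, ht₂, he₂⟩
      rcases Sym2.eq_iff.mp he₂ with ⟨-, h2⟩ | ⟨h1, h2⟩
      · rw [← ht₁, ← ht₂, σ'.injective h2]
      · exact absurd (by rw [← ht₁, σ'.injective (h2.trans hb)]) hc₁.1
  have hEa2 : Ea.ncard ≤ 2 := by
    refine le_trans (ncard_le_of_rel (Set.toFinite _) (fun e x => e = s(a, x)) ?_ ?_) (hdeg a)
    · intro e he
      obtain ⟨j, -, -, hadj, hej⟩ := hEa_wit e he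
      exact ⟨σ j, hadj, hej⟩
    · rintro e₁ - e₂ - x rfl rfl
      rfl
  -- loss set is contained in b and its neighbors
  have hLsub : ELo \ ELn ⊆ insert b (G.neighborSet b) := by
    rintro w ⟨⟨hwemp, hwtau⟩, hwn⟩
    by_contra hw
    simp only [Set.mem_insert_iff, SimpleGraph.mem_neighborSet, not_or] at hw
    obtain ⟨hwb, hwadj⟩ := hw
    refine hwn ⟨?_, ?_⟩
    · intro j hj
      by_cases hji : j = i
      · subst hji; exact hwb (by rw [← hj, hb])
      · exact hwemp j (by rw [← hfix j hji, hj])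
    · refine le_trans (Set.ncard_le_ncard ?_ (Set.toFinite _)) hwtau
      rintro c ⟨j, hadj, rfl⟩
      by_cases hji : j = i
      · subst hji; exact absurd hadj.symm hwadj
      · exact ⟨j, by rwa [hfix j hji] at hadj, rfl⟩
  -- gain at a
  have hGa : tauN G t σ' a ≤ 1 → 1 ≤ (ELn \ ELo).ncard := by
    intro hta
    have haG : a ∈ ELn \ ELo := by
      refine ⟨⟨fun j => haemp' j, hta⟩, fun hc => hc.1 i rfl⟩
    exact Set.ncard_pos (Set.toFinite _) |>.mpr ⟨a, haG⟩
  -- case analysis on the new utility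
  have hu'2 : util G t σ' i ≤ 2 := by
    refine le_trans (ncard_le_of_rel (Set.toFinite _)
      (fun c x => ∃ j : A, σ' j = x ∧ t j = c) ?_ ?_) (hdeg b)
    · rintro c ⟨-, j, hadj, rfl⟩
      exact ⟨σ' j, hadj, j, rfl, rfl⟩
    · rintro c₁ - c₂ - x ⟨j₁, he₁, rfl⟩ ⟨j₂, he₂, rfl⟩
      rw [σ'.injective (he₁.trans he₂.symm)]
  have hu'1 : 1 ≤ util G t σ' i := lt_of_le_of_lt (Nat.zero_le _) hutil
  interval_cases hu' : util G t σ' i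
  · -- util σ' i = 1
    have hu0 : util G t σ i = 0 := by omega
    have hEa0 : Ea = ∅ := by
      rw [Set.eq_empty_iff_forall_notMem]
      intro e he
      obtain ⟨j, -, htj, hadj, -⟩ := hEa_wit e he
      have : (0 : ℕ) < util G t σ i :=
        Set.ncard_pos (Set.toFinite _) |>.mpr ⟨t j, htj, j, hadj, rfl⟩
      omega
    obtain ⟨c₀, hc₀⟩ := Set.ncard_eq_one.mp hu'
    have hc₀m : c₀ ∈ {c : T | c ≠ t i ∧ ∃ j : A, G.Adj (σ' i) (σ' j) ∧ t j = c} := by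
      rw [hc₀]; rfl
    obtain ⟨hc₀t, j₀, hadj₀, htj₀⟩ := hc₀m
    have hj₀i : j₀ ≠ i := by
      rintro rfl
      exact G.loopless.irrefl _ hadj₀
    have hx₀ : σ' j₀ ∈ G.neighborSet b := hadj₀
    have hL2 : (ELo \ ELn).ncard ≤ 2 := by
      have hsub2 : ELo \ ELn ⊆ insert b (G.neighborSet b \ {σ' j₀}) := by
        intro w hw
        rcases hLsub hw with h1 | h1
        · exact Or.inl h1
        · refine Or.inr ⟨h1, fun hwx => ?_⟩
          have hwemp : IsEmptyNode σ w := hw.1.1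
          exact hwemp j₀ (by rw [← hfix j₀ hj₀i, hwx])
      calc (ELo \ ELn).ncard ≤ (insert b (G.neighborSet b \ {σ' j₀})).ncard :=
            Set.ncard_le_ncard hsub2 (Set.toFinite _)
        _ ≤ (G.neighborSet b \ {σ' j₀}).ncard + 1 := Set.ncard_insert_le _ _
        _ ≤ 2 := by
            have := Set.ncard_diff_singleton_add_one hx₀ (Set.toFinite _)
            have := hdeg b
            omega
    have hGn : 1 ≤ (ELn \ ELo).ncard := by
      refine hGa ?_
      have hsub : {c : T | ∃ j : A, G.Adj a (σ' j) ∧ t j = c} ⊆ {t i} := by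
        rintro c ⟨j, hadj, rfl⟩
        by_cases hji : j = i
        · subst hji; rfl
        · rw [hfix j hji] at hadj
          by_contra hc
          have : (0 : ℕ) < util G t σ i :=
            Set.ncard_pos (Set.toFinite _) |>.mpr ⟨t j, fun h => hc h, j, hadj, rfl⟩
          omega
      calc tauN G t σ' a ≤ ({t i} : Set T).ncard :=
            Set.ncard_le_ncard hsub (Set.finite_singleton _)
        _ = 1 := Set.ncard_singleton _
    have : Ea.ncard = 0 := by rw [hEa0, Set.ncard_empty]
    omega
  · -- util σ' i = 2
    obtain ⟨c₁, c₂, hc12, hcs⟩ := Set.ncard_eq_two.mp hu'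
    have hc₁m : c₁ ∈ {c : T | c ≠ t i ∧ ∃ j : A, G.Adj (σ' i) (σ' j) ∧ t j = c} := by
      rw [hcs]; exact Or.inl rfl
    have hc₂m : c₂ ∈ {c : T | c ≠ t i ∧ ∃ j : A, G.Adj (σ' i) (σ' j) ∧ t j = c} := by
      rw [hcs]; exact Or.inr rfl
    obtain ⟨hc₁t, j₁, hadj₁, htj₁⟩ := hc₁m
    obtain ⟨hc₂t, j₂, hadj₂, htj₂⟩ := hc₂m
    have hj₁i : j₁ ≠ i := by rintro rfl; exact G.loopless.irrefl _ hadj₁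
    have hj₂i : j₂ ≠ i := by rintro rfl; exact G.loopless.irrefl _ hadj₂
    have hx12 : σ' j₁ ≠ σ' j₂ := by
      intro hx
      exact hc12 (by rw [← htj₁, ← htj₂, σ'.injective hx])
    have hx₁ : σ' j₁ ∈ G.neighborSet b := hadj₁
    have hx₂ : σ' j₂ ∈ G.neighborSet b := hadj₂
    have hNb : ∀ x ∈ G.neighborSet b, x = σ' j₁ ∨ x = σ' j₂ := by
      intro x hx
      by_contra hc
      push_neg at hc
      exact not_three_distinct (Set.toFinite _) (hdeg b) hx hx₁ hx₂ hc.1 hc.2 hx12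
    -- no losses
    have hL0 : (ELo \ ELn).ncard = 0 := by
      rw [Set.ncard_eq_zero (Set.toFinite _), Set.eq_empty_iff_forall_notMem]
      intro w hw
      rcases hLsub hw with h1 | h1
      · -- w = b : but τ_b(σ) ≥ 2
        subst h1
        have h2 : 1 < tauN G t σ b := by
          refine Set.one_lt_ncard (Set.toFinite _) |>.mpr
            ⟨t j₁, ⟨j₁, ?_, rfl⟩, t j₂, ⟨j₂, ?_, rfl⟩, by rw [htj₁, htj₂]; exact hc12⟩
          · rw [← hfix j₁ hj₁i]; exact hadj₁
          · rw [← hfix j₂ hj₂i]; exact hadj₂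
        have := hw.1.2
        omega
      · -- w is an occupied neighbor of b
        rcases hNb w h1 with rfl | rfl
        · exact hw.1.1 j₁ (hfix j₁ hj₁i).symm
        · exact hw.1.1 j₂ (hfix j₂ hj₂i).symm
    have hEb2 : 2 ≤ Eb.ncard := hu' ▸ hu'Eb
    by_cases hEasm : Ea.ncard ≤ 1
    · omega
    · -- Ea has two edges; then both neighbors of a carry the same type
      push_neg at hEasm
      obtain ⟨e₁, he₁, e₂, he₂, he12⟩ := Set.one_lt_ncard (Set.toFinite _) |>.mp hEasm
      obtain ⟨k₁, hk₁i, htk₁, hak₁, hek₁⟩ := hEa_wit e₁ he₁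
      obtain ⟨k₂, hk₂i, htk₂, hak₂, hek₂⟩ := hEa_wit e₂ he₂
      have hk12 : σ k₁ ≠ σ k₂ := by
        intro hx
        exact he12 (by rw [hek₁, hek₂, hx])
      have hu1 : util G t σ i ≤ 1 := by omega
      have htkk : t k₁ = t k₂ := by
        refine Set.ncard_le_one (Set.toFinite _) |>.mp hu1 (t k₁)
          ⟨htk₁, k₁, hak₁, rfl⟩ (t k₂) ⟨htk₂, k₂, hak₂, rfl⟩
      have hNa : ∀ x ∈ G.neighborSet a, x = σ k₁ ∨ x = σ k₂ := by
        intro x hx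
        by_contra hc
        push_neg at hc
        exact not_three_distinct (Set.toFinite _) (hdeg a) hx hak₁ hak₂ hc.1 hc.2 hk12
      have hnadj : ¬ G.Adj a b := by
        intro hadj
        rcases hNa b hadj with h1 | h1
        · exact hemp k₁ h1.symm
        · exact hemp k₂ h1.symm
      have hGn : 1 ≤ (ELn \ ELo).ncard := by
        refine hGa ?_
        have hsub : {c : T | ∃ j : A, G.Adj a (σ' j) ∧ t j = c} ⊆ {t k₁} := by
          rintro c ⟨j, hadj, rfl⟩
          by_cases hji : j = i
          · subst hji; exact absurd (hb ▸ hadj) hnadj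
          · rw [hfix j hji] at hadj
            rcases hNa (σ j) hadj with h1 | h1
            · rw [σ.injective h1]; rfl
            · rw [σ.injective h1, ← htkk]; rfl
        calc tauN G t σ' a ≤ ({t k₁} : Set T).ncard :=
              Set.ncard_le_ncard hsub (Set.finite_singleton _)
          _ = 1 := Set.ncard_singleton _
      omega

end Aux

/-- On graphs of maximum degree at most 2, the function
`Φ(σ) = 2·CE(σ) + c(σ)` is an ordinal potential function; consequently there is
no improving response cycle and an equilibrium exists. -/
theorem stmt_3 {V A T : Type*} [Fintype V] [Fintype A] [Fintype T]
    (G : SimpleGraph V) (hG : G.Connected)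
    (hdeg : ∀ w : V, (G.neighborSet w).ncard ≤ 2)
    (hA : 2 ≤ Fintype.card A) (hVA : Fintype.card A < Fintype.card V)
    (t : A → T) (ht : Function.Surjective t) (hT : 2 ≤ Fintype.card T) :
    (∀ (σ σ' : A ↪ V) (i : A), ImpJump G t σ σ' i →
        2 * colorfulEdges G t σ + emptyLowCount G t σ <
          2 * colorfulEdges G t σ' + emptyLowCount G t σ') ∧
    (¬ ∃ (m : ℕ) (f : ℕ → (A ↪ V)), IsIRC G t m f) ∧
    (∃ σ : A ↪ V, IsEquilibrium G t σ) := by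
  constructor
  · intro σ σ' i h
    exact potential_increase G hdeg t σ σ' i h
  constructor
  · rintro ⟨m, f, hm, hcyc, hstep⟩
    have key : ∀ ℓ, ℓ ≤ m →
        2 * colorfulEdges G t (f 0) + emptyLowCount G t (f 0) + ℓ ≤
          2 * colorfulEdges G t (f ℓ) + emptyLowCount G t (f ℓ) := by
      intro ℓ
      induction ℓ with
      | zero => intro _; omega
      | succ n ih =>
        intro hn
        have h1 := ih (by omega)
        obtain ⟨j, hj⟩ := hstep n (by omega)
        have h2 := potential_increase G hdeg t (f n) (f (n + 1)) j hj
        omega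
    have := key m le_rfl
    rw [hcyc] at this
    omega
  · have hne : Nonempty (A ↪ V) := Function.Embedding.nonempty_of_card_le hVA.le
    obtain ⟨σ₀, hσ₀⟩ := Finite.exists_max
      (fun σ : A ↪ V => 2 * colorfulEdges G t σ + emptyLowCount G t σ)
    refine ⟨σ₀, fun σ' i h => ?_⟩
    have h1 := potential_increase G hdeg t σ₀ σ' i h
    have h2 := hσ₀ σ'
    omega
end

section
/- Suppose in a jump game assignment v' is obtained from assignment v by an improving jump of agent i from node s = v_i to node d = v'_i. Then: (1) τ_d(v) ≥ τ_s(v'); and (2) if τ_d(v) = τ_s(v'), then u_i(v') = u_i(v) + 1, the number of monochromatic edges strictly decreases (M(v') < M(v)), and every monochromatic edge under v' is also a monochromatic edge under v. -/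
open Finset

variable {V : Type*} {A : Type*} {T : Type*}

/-- If `σ'` is obtained from `σ` by an improving jump of agent `i`
from `s = σ i` to `d = σ' i`, then (1) `τ_d(σ) ≥ τ_s(σ')`, and (2) if equality
holds, the jumping agent's utility increases by exactly 1, the number of
monochromatic edges strictly decreases, and no new monochromatic edges are
created. -/
theorem stmt_4 {V A T : Type*} [Fintype V] [Fintype A] [Fintype T]
    (G : SimpleGraph V) (hG : G.Connected)
    (hA : 2 ≤ Fintype.card A) (hVA : Fintype.card A < Fintype.card V)
    (t : A → T) (ht : Function.Surjective t) (hT : 2 ≤ Fintype.card T)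
    (σ σ' : A ↪ V) (i : A) (hjump : ImpJump G t σ σ' i) :
    tauN G t σ' (σ i) ≤ tauN G t σ (σ' i) ∧
    (tauN G t σ (σ' i) = tauN G t σ' (σ i) →
      util G t σ' i = util G t σ i + 1 ∧
      monoEdges G t σ' < monoEdges G t σ ∧
      monoEdgeSet G t σ' ⊆ monoEdgeSet G t σ) := by
  classical
  obtain ⟨heqo, hemp, hlt⟩ := hjump
  have hinj := σ.injective
  have hsd : σ i ≠ σ' i := hemp i
  -- the source node is empty under σ'
  have hsempty : ∀ a : A, σ' a ≠ σ i := by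
    intro a h
    by_cases hai : a = i
    · exact hsd (hai ▸ h).symm
    · exact hai (hinj ((heqo a hai).symm.trans h))
  -- key sets of types
  set Ss : Set T := {c | ∃ j, j ≠ i ∧ G.Adj (σ i) (σ j) ∧ t j = c} with hSs
  set Sd : Set T := {c | ∃ j, j ≠ i ∧ G.Adj (σ' i) (σ j) ∧ t j = c} with hSd
  set Ts' : Set T := {c | ∃ j : A, G.Adj (σ i) (σ' j) ∧ t j = c} with hTs'
  set Td : Set T := {c | ∃ j : A, G.Adj (σ' i) (σ j) ∧ t j = c} with hTd
  have htau_s : tauN G t σ' (σ i) = Ts'.ncard := rfl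
  have htau_d : tauN G t σ (σ' i) = Td.ncard := rfl
  -- utilities as cardinalities of the key sets minus {t i}
  have hus : util G t σ i = (Ss \ {t i}).ncard := by
    unfold util
    congr 1
    ext c
    simp only [hSs, Set.mem_setOf_eq, Set.mem_diff, Set.mem_singleton_iff]
    constructor
    · rintro ⟨hc, j, hadj, rfl⟩
      have hji : j ≠ i := fun h => hc (by rw [h])
      exact ⟨⟨j, hji, hadj, rfl⟩, hc⟩
    · rintro ⟨⟨j, hji, hadj, rfl⟩, hc⟩
      exact ⟨hc, j, hadj, rfl⟩
  have hud : util G t σ' i = (Sd \ {t i}).ncard := by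
    unfold util
    congr 1
    ext c
    simp only [hSd, Set.mem_setOf_eq, Set.mem_diff, Set.mem_singleton_iff]
    constructor
    · rintro ⟨hc, j, hadj, rfl⟩
      have hji : j ≠ i := fun h => hc (by rw [h])
      rw [heqo j hji] at hadj
      exact ⟨⟨j, hji, hadj, rfl⟩, hc⟩
    · rintro ⟨⟨j, hji, hadj, rfl⟩, hc⟩
      refine ⟨hc, j, ?_, rfl⟩
      rw [heqo j hji]
      exact hadj
  -- the chain of inequalities
  have hsub1 : Ts' ⊆ insert (t i) (Ss \ {t i}) := by
    rintro c ⟨j, hadj, rfl⟩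
    by_cases h : t j = t i
    · exact Set.mem_insert_iff.mpr (Or.inl h)
    · have hji : j ≠ i := fun hh => h (by rw [hh])
      refine Set.mem_insert_iff.mpr (Or.inr ⟨⟨j, hji, ?_, rfl⟩, h⟩)
      rw [← heqo j hji]
      exact hadj
  have h1 : Ts'.ncard ≤ (Ss \ {t i}).ncard + 1 :=
    le_trans (Set.ncard_le_ncard hsub1 (Set.toFinite _)) (Set.ncard_insert_le _ _)
  have h3 : (Sd \ {t i}).ncard ≤ Sd.ncard :=
    Set.ncard_le_ncard Set.diff_subset (Set.toFinite _)
  have hsub2 : Sd ⊆ Td := by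
    rintro c ⟨j, _, hadj, rfl⟩
    exact ⟨j, hadj, rfl⟩
  have h2 : Sd.ncard ≤ Td.ncard := Set.ncard_le_ncard hsub2 (Set.toFinite _)
  have hchain : tauN G t σ' (σ i) ≤ tauN G t σ (σ' i) := by
    rw [htau_s, htau_d]
    calc Ts'.ncard ≤ (Ss \ {t i}).ncard + 1 := h1
      _ = util G t σ i + 1 := by rw [hus]
      _ ≤ util G t σ' i := hlt
      _ = (Sd \ {t i}).ncard := hud
      _ ≤ Sd.ncard := h3
      _ ≤ Td.ncard := h2
  refine ⟨hchain, fun heqt => ?_⟩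
  -- equality case
  have e1 : util G t σ' i ≤ util G t σ i + 1 := by
    calc util G t σ' i = (Sd \ {t i}).ncard := hud
      _ ≤ Sd.ncard := h3
      _ ≤ Td.ncard := h2
      _ = Ts'.ncard := by rw [← htau_d, ← htau_s, heqt]
      _ ≤ (Ss \ {t i}).ncard + 1 := h1
      _ = util G t σ i + 1 := by rw [hus]
  have hutil : util G t σ' i = util G t σ i + 1 := le_antisymm e1 hlt
  have e2 : Td.ncard ≤ (Sd \ {t i}).ncard := by
    calc Td.ncard = Ts'.ncard := by rw [← htau_d, ← htau_s, heqt]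
      _ ≤ (Ss \ {t i}).ncard + 1 := h1
      _ = util G t σ i + 1 := by rw [hus]
      _ = util G t σ' i := hutil.symm
      _ = (Sd \ {t i}).ncard := hud
  -- t i is not in Sd
  have hSdeq : Sd \ {t i} = Sd :=
    Set.eq_of_subset_of_ncard_le Set.diff_subset (le_trans h2 e2) (Set.toFinite _)
  have htiSd : t i ∉ Sd := by
    intro h
    rw [← hSdeq] at h
    exact h.2 rfl
  -- Sd = Td, hence ¬ Adj d s
  have hSdTd : Sd = Td :=
    Set.eq_of_subset_of_ncard_le hsub2 (le_trans e2 h3) (Set.toFinite _)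
  have hnAdj : ¬ G.Adj (σ' i) (σ i) := by
    intro h
    exact htiSd (hSdTd ▸ (⟨i, h, rfl⟩ : t i ∈ Td))
  -- Ts' equals the full insert, so t i ∈ Ss
  have e3 : (insert (t i) (Ss \ {t i})).ncard ≤ Ts'.ncard := by
    calc (insert (t i) (Ss \ {t i})).ncard
        = (Ss \ {t i}).ncard + 1 :=
          Set.ncard_insert_of_notMem (fun h => h.2 rfl) (Set.toFinite _)
      _ = util G t σ i + 1 := by rw [hus]
      _ = util G t σ' i := hutil.symm
      _ = (Sd \ {t i}).ncard := hud
      _ ≤ Sd.ncard := h3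
      _ ≤ Td.ncard := h2
      _ = Ts'.ncard := by rw [← htau_d, ← htau_s, heqt]
  have hTs'eq : Ts' = insert (t i) (Ss \ {t i}) :=
    Set.eq_of_subset_of_ncard_le hsub1 e3 (Set.toFinite _)
  have htiTs' : t i ∈ Ts' := by
    rw [hTs'eq]
    exact Set.mem_insert _ _
  obtain ⟨j, hadj, hjt⟩ := htiTs'
  have hji : j ≠ i := by
    rintro rfl
    exact hnAdj hadj.symm
  rw [heqo j hji] at hadj
  -- monoEdgeSet σ' ⊆ monoEdgeSet σ
  have hsub : monoEdgeSet G t σ' ⊆ monoEdgeSet G t σ := by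
    rintro e ⟨hE, a, b, hab, htab, rfl⟩
    by_cases hai : a = i
    · exfalso
      have hbi : b ≠ i := fun h => hab (hai.trans h.symm)
      have h := G.mem_edgeSet.mp hE
      rw [hai, heqo b hbi] at h
      exact htiSd ⟨b, hbi, h, by rw [← htab, hai]⟩
    · by_cases hbi : b = i
      · exfalso
        have h := G.mem_edgeSet.mp hE
        rw [hbi, heqo a hai] at h
        exact htiSd ⟨a, hai, h.symm, by rw [htab, hbi]⟩
      · exact ⟨hE, a, b, hab, htab, by rw [heqo a hai, heqo b hbi]⟩
  -- the old monochromatic edge at the source disappears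
  have hmem : s(σ i, σ j) ∈ monoEdgeSet G t σ :=
    ⟨G.mem_edgeSet.mpr hadj, i, j, hji.symm, hjt.symm, rfl⟩
  have hnmem : s(σ i, σ j) ∉ monoEdgeSet G t σ' := by
    rintro ⟨hE, a, b, hab, htab, he⟩
    rcases Sym2.eq_iff.mp he with ⟨h1, _⟩ | ⟨h1, _⟩
    · exact hsempty a h1.symm
    · exact hsempty b h1.symm
  have hss : monoEdgeSet G t σ' ⊂ monoEdgeSet G t σ :=
    (Set.ssubset_iff_of_subset hsub).mpr ⟨s(σ i, σ j), hmem, hnmem⟩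
  exact ⟨hutil, Set.ncard_lt_ncard hss (Set.toFinite _), hsub⟩
end

section
/- In a jump game whose graph is 3-regular and has exactly two empty nodes (|V| = n + 2), the function Φ(v) = 2(TE(v) + M(v)) + B(v) strictly decreases under improving jumps: if assignment v' is obtained from assignment v by an improving jump of some agent, then Φ(v') < Φ(v). Consequently the game is a potential game and an equilibrium assignment exists. -/
open Finset

variable {V : Type*} {A : Type*} {T : Type*}

open scoped Classical

lemma arith (a a' mu ou mw ow p q r r' al be ga : ℕ)
    (h1 : a + 1 ≤ a') (h2 : mu + ou + al + be = 3) (h3 : mw + ow + al + ga = 3)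
    (h4 : a ≤ ou) (h5 : a' ≤ ow) (h6 : 1 ≤ ou → 1 ≤ a) (h7 : 1 ≤ ow → 1 ≤ a')
    (hp : p ≤ 1) (hp2 : p = 1 → (1 ≤ mu ∨ al = 1))
    (hq : (1 ≤ mw ∨ al = 1) → q = 1) (hq1 : q ≤ 1)
    (hal : al ≤ 1) (hbe : be ≤ 1) (hga : ga ≤ 1)
    (hrr : 2*r' + be ≤ 2*r + ga + 1) :
    2*(a+p+r'+mw) + be < 2*(a'+q+r+mu) + ga := by
  have h6' : ou = 0 ∨ 1 ≤ a := by
    rcases Nat.eq_zero_or_pos ou with h|h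
    · exact Or.inl h
    · exact Or.inr (h6 h)
  have h7' : ow = 0 ∨ 1 ≤ a' := by
    rcases Nat.eq_zero_or_pos ow with h|h
    · exact Or.inl h
    · exact Or.inr (h7 h)
  have hq' : q = 1 ∨ (mw = 0 ∧ al ≠ 1) := by
    by_cases hm : 1 ≤ mw
    · exact Or.inl (hq (Or.inl hm))
    · by_cases ha : al = 1
      · exact Or.inl (hq (Or.inr ha))
      · exact Or.inr ⟨by omega, ha⟩
  have hp' : p = 0 ∨ 1 ≤ mu ∨ al = 1 := by
    rcases Nat.eq_zero_or_pos p with h|h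
    · exact Or.inl h
    · exact Or.inr (hp2 (by omega))
  rcases h6' with h6'|h6' <;> rcases h7' with h7'|h7' <;>
    rcases hq' with hq'|⟨hq'1,hq'2⟩ <;>
    rcases hp' with hp'|hp'|hp' <;> omega

lemma ncard_union_ite {T : Type*} [Fintype T] (S : Set T) (c : T) (P : Prop) [Decidable P] :
    (S ∪ (if P then {c} else ∅)).ncard = (S \ {c}).ncard + (if c ∈ S ∨ P then 1 else 0) := by
  by_cases hP : P
  · rw [if_pos hP, if_pos (Or.inr hP)]
    have h1 : S ∪ {c} = insert c (S \ {c}) := by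
      ext x; by_cases hx : x = c <;> simp [hx]
    rw [h1, Set.ncard_insert_of_notMem (by simp) (Set.toFinite _)]
  · rw [if_neg hP, Set.union_empty]
    by_cases hc : c ∈ S
    · rw [if_pos (Or.inl hc)]
      have h1 : S = insert c (S \ {c}) := by
        ext x; by_cases hx : x = c <;> simp [hx, hc]
      conv_lhs => rw [h1]
      rw [Set.ncard_insert_of_notMem (by simp) (Set.toFinite _)]
    · rw [if_neg (by tauto), Set.diff_singleton_eq_self hc, add_zero]

lemma ncard_inter_pair {V : Type*} [Fintype V] (S : Set V) {w z : V} (h : w ≠ z) :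
    (S ∩ {w, z}).ncard = (if w ∈ S then 1 else 0) + (if z ∈ S then 1 else 0) := by
  by_cases hw : w ∈ S <;> by_cases hz : z ∈ S
  · have : S ∩ {w, z} = {w, z} := by
      ext x; constructor
      · exact fun hx => hx.2
      · rintro (rfl|rfl) <;> simp [hw, hz]
    rw [this, Set.ncard_pair h]; simp [hw, hz]
  · have : S ∩ {w, z} = {w} := by
      ext x; constructor
      · rintro ⟨hx1, (rfl|rfl)⟩ <;> simp_all
      · rintro rfl; simp [hw]
    simp [this, hw, hz]
  · have : S ∩ {w, z} = {z} := by
      ext x; constructor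
      · rintro ⟨hx1, (rfl|rfl)⟩ <;> simp_all
      · rintro rfl; simp [hz]
    simp [this, hw, hz]
  · have : S ∩ {w, z} = ∅ := by
      ext x; simp only [Set.mem_inter_iff, Set.mem_insert_iff, Set.mem_singleton_iff,
        Set.mem_empty_iff_false, iff_false, not_and]
      rintro hx (rfl|rfl) <;> tauto
    simp [this, hw, hz]


lemma key {V A T : Type*} [Fintype V] [Fintype A] [Fintype T]
    (G : SimpleGraph V)
    (hreg : ∀ w : V, (G.neighborSet w).ncard = 3)
    (hVA : Fintype.card V = Fintype.card A + 2)
    (t : A → T) (σ σ' : A ↪ V) (i : A) (h : ImpJump G t σ σ' i) :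
    2 * (totalEmptyTypeCount G t σ' + monoEdges G t σ') + adjEmptyIndicator G σ' <
      2 * (totalEmptyTypeCount G t σ + monoEdges G t σ) + adjEmptyIndicator G σ := by
  obtain ⟨hagree, hemptyw, hutil⟩ := h
  -- names
  set u : V := σ i with hu
  set w : V := σ' i with hw
  have huw : u ≠ w := hemptyw i
  -- empty nodes of σ are exactly {w, z}
  have hEσ : {x : V | IsEmptyNode σ x} = (Set.range σ)ᶜ := by
    ext x; simp [IsEmptyNode, Set.mem_range, not_exists]
  have hc2 : ((Set.range σ)ᶜ : Set V).ncard = 2 := by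
    have h1 : (Set.range (σ : A → V)).ncard + ((Set.range (σ : A → V))ᶜ).ncard = Nat.card V :=
      Set.ncard_add_ncard_compl _ (Set.toFinite _) (Set.toFinite _)
    have h2 : (Set.range (σ : A → V)).ncard = Fintype.card A := by
      rw [← Nat.card_coe_set_eq, Nat.card_range_of_injective σ.injective,
        Nat.card_eq_fintype_card]
    rw [Nat.card_eq_fintype_card, hVA] at h1
    omega
  obtain ⟨z, hwz, hzE, hEσ2⟩ :
      ∃ z : V, w ≠ z ∧ IsEmptyNode σ z ∧ {x : V | IsEmptyNode σ x} = {w, z} := by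
    have hc2' : ({x : V | IsEmptyNode σ x}).ncard = 2 := by rw [hEσ]; exact hc2
    obtain ⟨x, y, hxy, hset⟩ := Set.ncard_eq_two.mp hc2'
    have hwmem : w ∈ ({x, y} : Set V) := by rw [← hset]; exact hemptyw
    rcases hwmem with rfl | rfl
    · exact ⟨y, hxy, by rw [Set.ext_iff] at hset; exact (hset y).2 (Or.inr rfl), hset⟩
    · refine ⟨x, Ne.symm hxy, by rw [Set.ext_iff] at hset; exact (hset x).2 (Or.inl rfl), ?_⟩
      rw [hset, Set.pair_comm]
  have huz : u ≠ z := fun e => hzE i e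
  -- empty nodes of σ' are exactly {u, z}
  have hEσ'2 : {x : V | IsEmptyNode σ' x} = {u, z} := by
    ext x
    simp only [Set.mem_setOf_eq, Set.mem_insert_iff, Set.mem_singleton_iff]
    constructor
    · intro hx
      by_contra hcon
      push_neg at hcon
      obtain ⟨hxu, hxz⟩ := hcon
      by_cases hxw : x = w
      · exact hx i (hxw ▸ rfl)
      · have hxocc : x ∉ {x : V | IsEmptyNode σ x} := by
          rw [hEσ2]; simp [hxw, hxz]
        simp only [Set.mem_setOf_eq, IsEmptyNode] at hxocc
        push_neg at hxocc
        obtain ⟨j, hj⟩ := hxocc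
        have hji : j ≠ i := by rintro rfl; exact hxu hj.symm
        exact hx j (by rw [hagree j hji]; exact hj)
    · rintro (rfl | rfl)
      · intro j hj
        by_cases hji : j = i
        · subst hji; exact huw (hj.symm) 
        · exact σ.injective (by rw [← hagree j hji]; exact hj) |> hji
      · intro j hj
        by_cases hji : j = i
        · subst hji; exact hwz (hj) 
        · exact hzE j (by rw [← hagree j hji]; exact hj)
  have huE' : IsEmptyNode σ' u := by rw [Set.ext_iff] at hEσ'2; exact ((hEσ'2 u).2 (Or.inl rfl))
  have hzE' : IsEmptyNode σ' z := by rw [Set.ext_iff] at hEσ'2; exact ((hEσ'2 z).2 (Or.inr rfl))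
  -- TE decomposition
  have hTEσ : totalEmptyTypeCount G t σ = tauN G t σ w + tauN G t σ z := by
    rw [totalEmptyTypeCount, hEσ2, finsum_mem_pair hwz]
  have hTEσ' : totalEmptyTypeCount G t σ' = tauN G t σ' u + tauN G t σ' z := by
    rw [totalEmptyTypeCount, hEσ'2, finsum_mem_pair huz]
  -- B values
  have hBσ : adjEmptyIndicator G σ = (if G.Adj w z then 1 else 0) := by
    have hiff : (∃ w₁ w₂ : V, IsEmptyNode σ w₁ ∧ IsEmptyNode σ w₂ ∧ G.Adj w₁ w₂) ↔ G.Adj w z := by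
      constructor
      · rintro ⟨x, y, hx, hy, hadj⟩
        rw [Set.ext_iff] at hEσ2
        have hx' := (hEσ2 x).1 hx
        have hy' := (hEσ2 y).1 hy
        simp only [Set.mem_insert_iff, Set.mem_singleton_iff] at hx' hy'
        rcases hx' with rfl | rfl <;> rcases hy' with rfl | rfl
        · exact absurd rfl hadj.ne
        · exact hadj
        · exact hadj.symm
        · exact absurd rfl hadj.ne
      · intro hadj; exact ⟨w, z, hemptyw, hzE, hadj⟩
    rw [adjEmptyIndicator]; simp only [hiff]
  have hBσ' : adjEmptyIndicator G σ' = (if G.Adj u z then 1 else 0) := by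
    have hiff : (∃ w₁ w₂ : V, IsEmptyNode σ' w₁ ∧ IsEmptyNode σ' w₂ ∧ G.Adj w₁ w₂) ↔ G.Adj u z := by
      constructor
      · rintro ⟨x, y, hx, hy, hadj⟩
        rw [Set.ext_iff] at hEσ'2
        have hx' := (hEσ'2 x).1 hx
        have hy' := (hEσ'2 y).1 hy
        simp only [Set.mem_insert_iff, Set.mem_singleton_iff] at hx' hy'
        rcases hx' with rfl | rfl <;> rcases hy' with rfl | rfl
        · exact absurd rfl hadj.ne
        · exact hadj
        · exact hadj.symm
        · exact absurd rfl hadj.ne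
      · intro hadj; exact ⟨u, z, huE', hzE', hadj⟩
    rw [adjEmptyIndicator]; simp only [hiff]
  -- type sets
  set ti := t i with hti
  set Uset : Set T := {c | ∃ j, G.Adj u (σ j) ∧ t j = c} with hUset
  set Wset : Set T := {c | ∃ j, G.Adj w (σ' j) ∧ t j = c} with hWset
  set Zset : Set T := {c | ∃ j, j ≠ i ∧ G.Adj z (σ j) ∧ t j = c} with hZset
  have hutilu : util G t σ i = (Uset \ {ti}).ncard := by
    rw [util]
    congr 1
    ext c
    simp only [hUset, Set.mem_setOf_eq, Set.mem_diff, Set.mem_singleton_iff, ← hu, ← hti]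
    tauto
  have hutilw : util G t σ' i = (Wset \ {ti}).ncard := by
    rw [util]
    congr 1
    ext c
    simp only [hWset, Set.mem_setOf_eq, Set.mem_diff, Set.mem_singleton_iff, ← hw, ← hti]
    tauto
  have hdW : {c : T | ∃ j, G.Adj w (σ j) ∧ t j = c} = Wset ∪ (if G.Adj u w then {ti} else ∅) := by
    ext c
    simp only [Set.mem_setOf_eq, Set.mem_union, hWset]
    constructor
    · rintro ⟨j, hj, rfl⟩
      by_cases hji : j = i
      · subst hji
        right
        rw [if_pos (by rw [← hu] at hj; exact hj.symm)]
        rw [hti]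
        exact rfl
      · exact Or.inl ⟨j, by rw [hagree j hji]; exact hj, rfl⟩
    · rintro (⟨j, hj, rfl⟩ | hc)
      · have hji : j ≠ i := by
          rintro rfl
          rw [← hw] at hj
          exact G.loopless.irrefl w hj
        rw [hagree j hji] at hj
        exact ⟨j, hj, rfl⟩
      · by_cases hadj : G.Adj u w
        · rw [if_pos hadj] at hc
          rw [Set.mem_singleton_iff] at hc
          subst hc
          exact ⟨i, by rw [← hu]; exact hadj.symm, rfl⟩
        · rw [if_neg hadj] at hc
          exact absurd hc (Set.notMem_empty c)
  have htauw : tauN G t σ w = util G t σ' i + (if ti ∈ Wset ∨ G.Adj u w then 1 else 0) := by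
    rw [tauN, hdW, ncard_union_ite, hutilw]
    congr 1
    split_ifs <;> rfl
  have hdU : {c : T | ∃ j, G.Adj u (σ' j) ∧ t j = c} = Uset ∪ (if G.Adj u w then {ti} else ∅) := by
    ext c
    simp only [Set.mem_setOf_eq, Set.mem_union, hUset]
    constructor
    · rintro ⟨j, hj, rfl⟩
      by_cases hji : j = i
      · subst hji
        right
        rw [if_pos (by rw [← hw] at hj; exact hj)]
        rw [hti]
        exact rfl
      · exact Or.inl ⟨j, by rw [← hagree j hji]; exact hj, rfl⟩
    · rintro (⟨j, hj, rfl⟩ | hc)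
      · have hji : j ≠ i := by
          rintro rfl
          rw [← hu] at hj
          exact G.loopless.irrefl u hj
        rw [← hagree j hji] at hj
        exact ⟨j, hj, rfl⟩
      · by_cases hadj : G.Adj u w
        · rw [if_pos hadj] at hc
          rw [Set.mem_singleton_iff] at hc
          subst hc
          exact ⟨i, by rw [← hw]; exact hadj, rfl⟩
        · rw [if_neg hadj] at hc
          exact absurd hc (Set.notMem_empty c)
  have htauu : tauN G t σ' u = util G t σ i + (if ti ∈ Uset ∨ G.Adj u w then 1 else 0) := by
    rw [tauN, hdU, ncard_union_ite, hutilu]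
    congr 1
    split_ifs <;> rfl
  have hdZ1 : {c : T | ∃ j, G.Adj z (σ j) ∧ t j = c} = Zset ∪ (if G.Adj u z then {ti} else ∅) := by
    ext c
    simp only [Set.mem_setOf_eq, Set.mem_union, hZset]
    constructor
    · rintro ⟨j, hj, rfl⟩
      by_cases hji : j = i
      · subst hji
        right
        rw [if_pos (by rw [← hu] at hj; exact hj.symm)]
        rw [hti]
        exact rfl
      · exact Or.inl ⟨j, hji, hj, rfl⟩
    · rintro (⟨j, hji, hj, rfl⟩ | hc)
      · exact ⟨j, hj, rfl⟩
      · by_cases hadj : G.Adj u z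
        · rw [if_pos hadj] at hc
          rw [Set.mem_singleton_iff] at hc
          subst hc
          exact ⟨i, by rw [← hu]; exact hadj.symm, rfl⟩
        · rw [if_neg hadj] at hc
          exact absurd hc (Set.notMem_empty c)
  have hdZ2 : {c : T | ∃ j, G.Adj z (σ' j) ∧ t j = c} = Zset ∪ (if G.Adj w z then {ti} else ∅) := by
    ext c
    simp only [Set.mem_setOf_eq, Set.mem_union, hZset]
    constructor
    · rintro ⟨j, hj, rfl⟩
      by_cases hji : j = i
      · subst hji
        right
        rw [if_pos (by rw [← hw] at hj; exact hj.symm)]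
        rw [hti]
        exact rfl
      · exact Or.inl ⟨j, hji, by rw [← hagree j hji]; exact hj, rfl⟩
    · rintro (⟨j, hji, hj, rfl⟩ | hc)
      · exact ⟨j, by rw [hagree j hji]; exact hj, rfl⟩
      · by_cases hadj : G.Adj w z
        · rw [if_pos hadj] at hc
          rw [Set.mem_singleton_iff] at hc
          subst hc
          exact ⟨i, by rw [← hw]; exact hadj.symm, rfl⟩
        · rw [if_neg hadj] at hc
          exact absurd hc (Set.notMem_empty c)
  have htauz : tauN G t σ z = (Zset \ {ti}).ncard + (if ti ∈ Zset ∨ G.Adj u z then 1 else 0) := by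
    rw [tauN, hdZ1, ncard_union_ite]
    congr 1
    split_ifs <;> rfl
  have htauz' : tauN G t σ' z = (Zset \ {ti}).ncard + (if ti ∈ Zset ∨ G.Adj w z then 1 else 0) := by
    rw [tauN, hdZ2, ncard_union_ite]
    congr 1
    split_ifs <;> rfl
  -- monochromatic edges
  set Ju : Set A := {j | j ≠ i ∧ G.Adj u (σ j) ∧ t j = ti} with hJu
  set Jw : Set A := {j | j ≠ i ∧ G.Adj w (σ' j) ∧ t j = ti} with hJw
  set Pu : Set (Sym2 V) := {e ∈ monoEdgeSet G t σ | u ∉ e} with hPu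
  have hMσ : monoEdges G t σ = Pu.ncard + Ju.ncard := by
    have hsplit : monoEdgeSet G t σ = Pu ∪ {e ∈ monoEdgeSet G t σ | u ∈ e} := by
      ext e
      simp only [hPu, Set.mem_union, Set.mem_sep_iff]
      tauto
    have hdisj : Disjoint Pu {e ∈ monoEdgeSet G t σ | u ∈ e} := by
      rw [Set.disjoint_left]
      rintro e ⟨_, hue⟩ ⟨_, hue'⟩
      exact hue hue'
    have hQ : {e ∈ monoEdgeSet G t σ | u ∈ e} = (fun j => s(u, σ j)) '' Ju := by
      ext e
      constructor
      · rintro ⟨⟨hedge, j, k, hjk, htjk, rfl⟩, hue⟩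
        rw [Sym2.mem_iff] at hue
        rcases hue with hju | hku
        · have hji : j = i := (σ.injective (hu.symm.trans hju)).symm
          subst hji
          refine ⟨k, ⟨fun hk => hjk hk.symm, ?_, ?_⟩, ?_⟩
          · rw [SimpleGraph.mem_edgeSet] at hedge
            rw [← hu] at hedge
            exact hedge
          · rw [hti]
            exact htjk.symm
          · rw [hu]
        · have hki : k = i := (σ.injective (hu.symm.trans hku)).symm
          subst hki
          refine ⟨j, ⟨hjk, ?_, ?_⟩, ?_⟩
          · rw [SimpleGraph.mem_edgeSet] at hedge
            rw [← hu] at hedge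
            exact hedge.symm
          · rw [hti]
            exact htjk
          · rw [hu, Sym2.eq_swap]
      · rintro ⟨j, ⟨hji, hadj, htj⟩, rfl⟩
        refine ⟨⟨?_, i, j, Ne.symm hji, htj.trans hti |>.symm, by rw [hu]⟩, ?_⟩
        · rw [SimpleGraph.mem_edgeSet]
          exact hadj
        · rw [Sym2.mem_iff]
          exact Or.inl rfl
    have himg : ((fun j => s(u, σ j)) '' Ju).ncard = Ju.ncard := by
      apply Set.ncard_image_of_injOn
      intro j hj k hk he
      simp only [Sym2.eq_iff] at he
      rcases he with ⟨-, h2⟩ | ⟨h1, h2⟩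
      · exact σ.injective h2
      · exact absurd (σ.injective (h2.trans hu)) hj.1
    rw [monoEdges, hsplit, Set.ncard_union_eq hdisj (Set.toFinite _) (Set.toFinite _), hQ, himg]
  have hMσ' : monoEdges G t σ' = Pu.ncard + Jw.ncard := by
    have hPP : {e ∈ monoEdgeSet G t σ' | w ∉ e} = Pu := by
      ext e
      simp only [hPu, Set.mem_sep_iff]
      constructor
      · rintro ⟨⟨hedge, j, k, hjk, htjk, rfl⟩, hwe⟩
        have hji : j ≠ i := by
          rintro rfl
          exact hwe (by rw [← hw, Sym2.mem_iff]; exact Or.inl rfl)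
        have hki : k ≠ i := by
          rintro rfl
          exact hwe (by rw [← hw, Sym2.mem_iff]; exact Or.inr rfl)
        rw [hagree j hji, hagree k hki] at hedge ⊢
        refine ⟨⟨hedge, j, k, hjk, htjk, rfl⟩, ?_⟩
        intro hue
        rw [Sym2.mem_iff] at hue
        rcases hue with h1 | h1
        · exact hji (σ.injective (h1.symm.trans hu))
        · exact hki (σ.injective (h1.symm.trans hu))
      · rintro ⟨⟨hedge, j, k, hjk, htjk, rfl⟩, hue⟩
        have hji : j ≠ i := by
          rintro rfl
          exact hue (by rw [← hu, Sym2.mem_iff]; exact Or.inl rfl)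
        have hki : k ≠ i := by
          rintro rfl
          exact hue (by rw [← hu, Sym2.mem_iff]; exact Or.inr rfl)
        rw [← hagree j hji, ← hagree k hki] at hedge ⊢
        refine ⟨⟨hedge, j, k, hjk, htjk, rfl⟩, ?_⟩
        intro hwe
        rw [Sym2.mem_iff] at hwe
        rcases hwe with h1 | h1
        · exact hemptyw j (by rw [← hagree j hji]; exact h1.symm)
        · exact hemptyw k (by rw [← hagree k hki]; exact h1.symm)
    have hsplit : monoEdgeSet G t σ' = {e ∈ monoEdgeSet G t σ' | w ∉ e} ∪
        {e ∈ monoEdgeSet G t σ' | w ∈ e} := by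
      ext e
      simp only [Set.mem_union, Set.mem_sep_iff]
      tauto
    have hdisj : Disjoint {e ∈ monoEdgeSet G t σ' | w ∉ e} {e ∈ monoEdgeSet G t σ' | w ∈ e} := by
      rw [Set.disjoint_left]
      rintro e ⟨_, hue⟩ ⟨_, hue'⟩
      exact hue hue'
    have hQ : {e ∈ monoEdgeSet G t σ' | w ∈ e} = (fun j => s(w, σ' j)) '' Jw := by
      ext e
      constructor
      · rintro ⟨⟨hedge, j, k, hjk, htjk, rfl⟩, hue⟩
        rw [Sym2.mem_iff] at hue
        rcases hue with hju | hku
        · have hji : j = i := (σ'.injective (hw.symm.trans hju)).symm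
          subst hji
          refine ⟨k, ⟨fun hk => hjk hk.symm, ?_, ?_⟩, ?_⟩
          · rw [SimpleGraph.mem_edgeSet] at hedge
            rw [← hw] at hedge
            exact hedge
          · rw [hti]
            exact htjk.symm
          · rw [hw]
        · have hki : k = i := (σ'.injective (hw.symm.trans hku)).symm
          subst hki
          refine ⟨j, ⟨hjk, ?_, ?_⟩, ?_⟩
          · rw [SimpleGraph.mem_edgeSet] at hedge
            rw [← hw] at hedge
            exact hedge.symm
          · rw [hti]
            exact htjk
          · rw [hw, Sym2.eq_swap]
      · rintro ⟨j, ⟨hji, hadj, htj⟩, rfl⟩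
        refine ⟨⟨?_, i, j, Ne.symm hji, htj.trans hti |>.symm, by rw [hw]⟩, ?_⟩
        · rw [SimpleGraph.mem_edgeSet]
          exact hadj
        · rw [Sym2.mem_iff]
          exact Or.inl rfl
    have himg : ((fun j => s(w, σ' j)) '' Jw).ncard = Jw.ncard := by
      apply Set.ncard_image_of_injOn
      intro j hj k hk he
      simp only [Sym2.eq_iff] at he
      rcases he with ⟨-, h2⟩ | ⟨h1, h2⟩
      · exact σ'.injective h2
      · exact absurd (σ'.injective (h2.trans hw)) hj.1
    rw [monoEdges, hsplit, Set.ncard_union_eq hdisj (Set.toFinite _) (Set.toFinite _), hQ, himg,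
      hPP]
  -- occupied-neighbour counting
  set Ou : Set A := {j | j ≠ i ∧ G.Adj u (σ j) ∧ t j ≠ ti} with hOu
  set Ow : Set A := {j | j ≠ i ∧ G.Adj w (σ' j) ∧ t j ≠ ti} with hOw
  have hcu : Ju.ncard + Ou.ncard + (if G.Adj u w then 1 else 0)
      + (if G.Adj u z then 1 else 0) = 3 := by
    have hJO : Ju ∪ Ou = {j | j ≠ i ∧ G.Adj u (σ j)} := by
      ext j
      simp only [hJu, hOu, Set.mem_union, Set.mem_setOf_eq]
      tauto
    have hJOd : Disjoint Ju Ou := by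
      rw [Set.disjoint_left]
      rintro j ⟨_, _, h1⟩ ⟨_, _, h2⟩
      exact h2 h1
    have himg2 : (σ '' (Ju ∪ Ou) : Set V) = G.neighborSet u \ {w, z} := by
      rw [hJO]
      ext x
      constructor
      · rintro ⟨j, ⟨hji, hadj⟩, rfl⟩
        refine ⟨hadj, ?_⟩
        simp only [Set.mem_insert_iff, Set.mem_singleton_iff, not_or]
        exact ⟨hemptyw j, hzE j⟩
      · rintro ⟨hxn, hx2⟩
        simp only [Set.mem_insert_iff, Set.mem_singleton_iff, not_or] at hx2
        have hocc : x ∉ {x : V | IsEmptyNode σ x} := by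
          rw [hEσ2]
          simp only [Set.mem_insert_iff, Set.mem_singleton_iff, not_or]
          exact hx2
        simp only [Set.mem_setOf_eq, IsEmptyNode] at hocc
        push_neg at hocc
        obtain ⟨j, hj⟩ := hocc
        have hji : j ≠ i := by
          rintro rfl
          rw [SimpleGraph.mem_neighborSet] at hxn
          exact hxn.ne' (hj.symm.trans hu.symm)
        exact ⟨j, ⟨hji, by rwa [SimpleGraph.mem_neighborSet, ← hj] at hxn⟩, hj⟩
    have hinj : ((σ : A → V) '' (Ju ∪ Ou)).ncard = (Ju ∪ Ou).ncard :=
      Set.ncard_image_of_injOn (σ.injective.injOn)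
    have hcnt : Ju.ncard + Ou.ncard = (G.neighborSet u \ {w, z}).ncard := by
      rw [← Set.ncard_union_eq hJOd (Set.toFinite _) (Set.toFinite _), ← hinj, himg2]
    have hsum : (G.neighborSet u ∩ {w, z}).ncard + (G.neighborSet u \ {w, z}).ncard = 3 := by
      rw [Set.ncard_inter_add_ncard_diff_eq_ncard _ _ (Set.toFinite _)]
      exact hreg u
    have hpair : (G.neighborSet u ∩ {w, z}).ncard =
        (if G.Adj u w then 1 else 0) + (if G.Adj u z then 1 else 0) := by
      rw [ncard_inter_pair _ hwz]
      congr 1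
    omega
  have hcw : Jw.ncard + Ow.ncard + (if G.Adj u w then 1 else 0)
      + (if G.Adj w z then 1 else 0) = 3 := by
    have hJO : Jw ∪ Ow = {j | j ≠ i ∧ G.Adj w (σ' j)} := by
      ext j
      simp only [hJw, hOw, Set.mem_union, Set.mem_setOf_eq]
      tauto
    have hJOd : Disjoint Jw Ow := by
      rw [Set.disjoint_left]
      rintro j ⟨_, _, h1⟩ ⟨_, _, h2⟩
      exact h2 h1
    have himg2 : (σ' '' (Jw ∪ Ow) : Set V) = G.neighborSet w \ {u, z} := by
      rw [hJO]
      ext x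
      constructor
      · rintro ⟨j, ⟨hji, hadj⟩, rfl⟩
        refine ⟨hadj, ?_⟩
        simp only [Set.mem_insert_iff, Set.mem_singleton_iff, not_or]
        exact ⟨huE' j, hzE' j⟩
      · rintro ⟨hxn, hx2⟩
        simp only [Set.mem_insert_iff, Set.mem_singleton_iff, not_or] at hx2
        have hocc : x ∉ {x : V | IsEmptyNode σ' x} := by
          rw [hEσ'2]
          simp only [Set.mem_insert_iff, Set.mem_singleton_iff, not_or]
          exact hx2
        simp only [Set.mem_setOf_eq, IsEmptyNode] at hocc
        push_neg at hocc
        obtain ⟨j, hj⟩ := hocc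
        have hji : j ≠ i := by
          rintro rfl
          rw [SimpleGraph.mem_neighborSet] at hxn
          exact hxn.ne' (hj.symm.trans hw.symm)
        exact ⟨j, ⟨hji, by rwa [SimpleGraph.mem_neighborSet, ← hj] at hxn⟩, hj⟩
    have hinj : ((σ' : A → V) '' (Jw ∪ Ow)).ncard = (Jw ∪ Ow).ncard :=
      Set.ncard_image_of_injOn (σ'.injective.injOn)
    have hcnt : Jw.ncard + Ow.ncard = (G.neighborSet w \ {u, z}).ncard := by
      rw [← Set.ncard_union_eq hJOd (Set.toFinite _) (Set.toFinite _), ← hinj, himg2]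
    have hsum : (G.neighborSet w ∩ {u, z}).ncard + (G.neighborSet w \ {u, z}).ncard = 3 := by
      rw [Set.ncard_inter_add_ncard_diff_eq_ncard _ _ (Set.toFinite _)]
      exact hreg w
    have hpair : (G.neighborSet w ∩ {u, z}).ncard =
        (if G.Adj u w then 1 else 0) + (if G.Adj w z then 1 else 0) := by
      rw [ncard_inter_pair _ huz]
      simp only [SimpleGraph.mem_neighborSet]
      rw [G.adj_comm w u]
    omega
  -- relating utilities to other-type neighbour sets
  have hOuA : Uset \ {ti} = t '' Ou := by
    ext c
    simp only [Set.mem_diff, Set.mem_singleton_iff, hUset, hOu, Set.mem_setOf_eq, Set.mem_image]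
    constructor
    · rintro ⟨⟨j, hadj, rfl⟩, hne⟩
      have hji : j ≠ i := by
        rintro rfl
        rw [← hu] at hadj
        exact G.loopless.irrefl u hadj
      exact ⟨j, ⟨hji, hadj, hne⟩, rfl⟩
    · rintro ⟨j, ⟨hji, hadj, hne⟩, rfl⟩
      exact ⟨⟨j, hadj, rfl⟩, hne⟩
  have hOwA : Wset \ {ti} = t '' Ow := by
    ext c
    simp only [Set.mem_diff, Set.mem_singleton_iff, hWset, hOw, Set.mem_setOf_eq, Set.mem_image]
    constructor
    · rintro ⟨⟨j, hadj, rfl⟩, hne⟩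
      have hji : j ≠ i := by
        rintro rfl
        rw [← hw] at hadj
        exact G.loopless.irrefl w hadj
      exact ⟨j, ⟨hji, hadj, hne⟩, rfl⟩
    · rintro ⟨j, ⟨hji, hadj, hne⟩, rfl⟩
      exact ⟨⟨j, hadj, rfl⟩, hne⟩
  have h4 : util G t σ i ≤ Ou.ncard := by
    rw [hutilu, hOuA]
    exact Set.ncard_image_le (Set.toFinite _)
  have h5 : util G t σ' i ≤ Ow.ncard := by
    rw [hutilw, hOwA]
    exact Set.ncard_image_le (Set.toFinite _)
  have h6 : 1 ≤ Ou.ncard → 1 ≤ util G t σ i := by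
    intro hcard
    have hne : Ou.Nonempty := by
      rw [← Set.ncard_pos (Set.toFinite _)]
      omega
    obtain ⟨j, hj⟩ := hne
    rw [hutilu]
    exact (Set.ncard_pos (Set.toFinite _)).mpr ⟨t j, hOuA ▸ Set.mem_image_of_mem t hj⟩
  have h7 : 1 ≤ Ow.ncard → 1 ≤ util G t σ' i := by
    intro hcard
    have hne : Ow.Nonempty := by
      rw [← Set.ncard_pos (Set.toFinite _)]
      omega
    obtain ⟨j, hj⟩ := hne
    rw [hutilw]
    exact (Set.ncard_pos (Set.toFinite _)).mpr ⟨t j, hOwA ▸ Set.mem_image_of_mem t hj⟩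
  -- p and q facts
  have hple : (if ti ∈ Uset ∨ G.Adj u w then 1 else 0 : ℕ) ≤ 1 := by split_ifs <;> omega
  have hqle : (if ti ∈ Wset ∨ G.Adj u w then 1 else 0 : ℕ) ≤ 1 := by split_ifs <;> omega
  have hp2 : (if ti ∈ Uset ∨ G.Adj u w then 1 else 0 : ℕ) = 1 →
      (1 ≤ Ju.ncard ∨ (if G.Adj u w then 1 else 0 : ℕ) = 1) := by
    intro hp
    by_cases hcond : ti ∈ Uset ∨ G.Adj u w
    · rcases hcond with hc | hc
      · left
        obtain ⟨j, hadj, htj⟩ := hc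
        have hji : j ≠ i := by
          rintro rfl
          rw [← hu] at hadj
          exact G.loopless.irrefl u hadj
        exact (Set.ncard_pos (Set.toFinite _)).mpr ⟨j, hji, hadj, htj⟩
      · right
        rw [if_pos hc]
    · rw [if_neg hcond] at hp
      exact absurd hp one_ne_zero.symm
  have hq : (1 ≤ Jw.ncard ∨ (if G.Adj u w then 1 else 0 : ℕ) = 1) →
      (if ti ∈ Wset ∨ G.Adj u w then 1 else 0 : ℕ) = 1 := by
    intro hyp
    have hcond : ti ∈ Wset ∨ G.Adj u w := by
      rcases hyp with h1 | h1
      · left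
        have hne : Jw.Nonempty := (Set.ncard_pos (Set.toFinite _)).mp (by omega)
        obtain ⟨j, hji, hadj, htj⟩ := hne
        exact ⟨j, hadj, htj⟩
      · right
        by_contra hc
        rw [if_neg hc] at h1
        exact one_ne_zero h1.symm
    rw [if_pos hcond]
  have hal : (if G.Adj u w then 1 else 0 : ℕ) ≤ 1 := by split_ifs <;> omega
  have hbe : (if G.Adj u z then 1 else 0 : ℕ) ≤ 1 := by split_ifs <;> omega
  have hga : (if G.Adj w z then 1 else 0 : ℕ) ≤ 1 := by split_ifs <;> omega
  have hrr : 2*(if ti ∈ Zset ∨ G.Adj w z then 1 else 0 : ℕ) + (if G.Adj u z then 1 else 0) ≤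
      2*(if ti ∈ Zset ∨ G.Adj u z then 1 else 0) + (if G.Adj w z then 1 else 0) + 1 := by
    by_cases h1 : ti ∈ Zset <;> by_cases h2 : G.Adj u z <;> by_cases h3 : G.Adj w z <;>
      simp [h1, h2, h3]
  have final := arith (util G t σ i) (util G t σ' i) Ju.ncard Ou.ncard Jw.ncard Ow.ncard
    (if ti ∈ Uset ∨ G.Adj u w then 1 else 0) (if ti ∈ Wset ∨ G.Adj u w then 1 else 0)
    (if ti ∈ Zset ∨ G.Adj u z then 1 else 0) (if ti ∈ Zset ∨ G.Adj w z then 1 else 0)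
    (if G.Adj u w then 1 else 0) (if G.Adj u z then 1 else 0) (if G.Adj w z then 1 else 0)
    hutil hcu hcw h4 h5 h6 h7 hple hp2 hq hqle hal hbe hga hrr
  rw [hTEσ, hTEσ', hBσ, hBσ', hMσ, hMσ', htauw, htauu, htauz, htauz']
  omega

/-- On a 3-regular graph with exactly two empty nodes
(|V| = n + 2), the function `Φ(σ) = 2(TE(σ) + M(σ)) + B(σ)` strictly decreases
under improving jumps; consequently the game is a potential game and an
equilibrium exists. -/
theorem stmt_5 {V A T : Type*} [Fintype V] [Fintype A] [Fintype T]
    (G : SimpleGraph V) (hG : G.Connected)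
    (hreg : ∀ w : V, (G.neighborSet w).ncard = 3)
    (hA : 2 ≤ Fintype.card A) (hVA : Fintype.card V = Fintype.card A + 2)
    (t : A → T) (ht : Function.Surjective t) (hT : 2 ≤ Fintype.card T) :
    (∀ (σ σ' : A ↪ V) (i : A), ImpJump G t σ σ' i →
        2 * (totalEmptyTypeCount G t σ' + monoEdges G t σ') + adjEmptyIndicator G σ' <
          2 * (totalEmptyTypeCount G t σ + monoEdges G t σ) + adjEmptyIndicator G σ) ∧
    (∃ Φ : (A ↪ V) → ℝ, ∀ (σ σ' : A ↪ V) (i : A),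
        ImpJump G t σ σ' i → Φ σ < Φ σ') ∧
    (∃ σ : A ↪ V, IsEquilibrium G t σ) := by
  classical
  have hkey : ∀ (σ σ' : A ↪ V) (i : A), ImpJump G t σ σ' i →
      2 * (totalEmptyTypeCount G t σ' + monoEdges G t σ') + adjEmptyIndicator G σ' <
        2 * (totalEmptyTypeCount G t σ + monoEdges G t σ) + adjEmptyIndicator G σ :=
    fun σ σ' i h => key G hreg hVA t σ σ' i h
  refine ⟨hkey, ⟨fun σ =>
      -((2 * (totalEmptyTypeCount G t σ + monoEdges G t σ) + adjEmptyIndicator G σ : ℕ) : ℝ),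
      ?_⟩, ?_⟩
  · intro σ σ' i h
    have h1 := hkey σ σ' i h
    have h2 : ((2 * (totalEmptyTypeCount G t σ' + monoEdges G t σ') + adjEmptyIndicator G σ' : ℕ) : ℝ)
        < ((2 * (totalEmptyTypeCount G t σ + monoEdges G t σ) + adjEmptyIndicator G σ : ℕ) : ℝ) := by
      exact_mod_cast h1
    dsimp only
    linarith
  · have hAV : Fintype.card A ≤ Fintype.card V := by omega
    obtain ⟨σ0⟩ : Nonempty (A ↪ V) := Function.Embedding.nonempty_of_card_le hAV
    obtain ⟨σm, -, hmin⟩ := Finset.exists_min_image Finset.univ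
      (fun σ : A ↪ V => 2 * (totalEmptyTypeCount G t σ + monoEdges G t σ) + adjEmptyIndicator G σ)
      ⟨σ0, Finset.mem_univ σ0⟩
    exact ⟨σm, fun σ' i h =>
      absurd (hkey σm σ' i h) (not_lt.mpr (hmin σ' (Finset.mem_univ σ')))⟩
end

section
/- Every jump game whose graph is a tree admits an equilibrium assignment. -/
open Finset

variable {V : Type*} {A : Type*} {T : Type*}

namespace Stmt6Aux

variable [DecidableEq V] [DecidableEq A]

set_option linter.unusedSectionVars false

/-- Agent `a` (placed by `g`) has a differently-typed placed neighbor. -/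
def Happy (G : SimpleGraph V) (t : A → T) (B : Finset A) (g : A → V) (a : A) : Prop :=
  ∃ b ∈ B, G.Adj (g a) (g b) ∧ t b ≠ t a

/-- Invariant of the greedy placement process: the placed agents `B` occupy a
connected set of nodes injectively, and either all of them are happy, or there
is a type `x` such that all unplaced agents have type `x`, all placed agents
are happy or have type `x`, and every placed agent adjacent to an empty node
has type `x`. -/
structure Inv (G : SimpleGraph V) (t : A → T) (B : Finset A) (g : A → V) : Prop where
  nonempty : B.Nonempty
  inj : Set.InjOn g ↑B
  conn : ∀ x ∈ B.image g, ∀ y ∈ B.image g,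
    ∃ p : G.Walk x y, ∀ z ∈ p.support, z ∈ B.image g
  mode : (∀ a ∈ B, Happy G t B g a) ∨
    (∃ x : T, (∀ a, a ∉ B → t a = x) ∧ (∀ a ∈ B, Happy G t B g a ∨ t a = x) ∧
      (∀ a ∈ B, (∃ w, w ∉ B.image g ∧ G.Adj (g a) w) → t a = x))

/-- Walking from inside `S` to outside `S`, some edge exits `S`. -/
lemma exit_edge {G : SimpleGraph V} {S : Finset V} :
    ∀ {x y : V} (_ : G.Walk x y), x ∈ S → y ∉ S →
      ∃ s ∈ S, ∃ v, v ∉ S ∧ G.Adj s v := by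
  intro x y p
  induction p with
  | nil => intro hx hy; exact absurd hx hy
  | @cons u u' w h q ih =>
    intro hx hy
    by_cases hu' : u' ∈ S
    · exact ih hu' hy
    · exact ⟨u, hx, u', hu', h⟩

/-- There is always a frontier: an occupied node adjacent to an empty node. -/
lemma border_exists [Fintype V] [Fintype A] {G : SimpleGraph V}
    (hpre : G.Preconnected) (hcard : Fintype.card A < Fintype.card V)
    {B : Finset A} {g : A → V} (hne : B.Nonempty) :
    ∃ b ∈ B, ∃ v, v ∉ B.image g ∧ G.Adj (g b) v := by
  obtain ⟨b0, hb0⟩ := hne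
  have hx0 : g b0 ∈ B.image g := Finset.mem_image_of_mem g hb0
  obtain ⟨y, hy⟩ : ∃ y, y ∉ B.image g := by
    by_contra h
    push_neg at h
    have huniv : (Finset.univ : Finset V) ⊆ B.image g := fun v _ => h v
    have h1 : Fintype.card V ≤ (B.image g).card := by
      simpa using Finset.card_le_card huniv
    have h2 : (B.image g).card ≤ B.card := Finset.card_image_le
    have h3 : B.card ≤ Fintype.card A := Finset.card_le_univ B
    omega
  obtain ⟨p⟩ := hpre (g b0) y
  obtain ⟨s, hs, v, hv, hadj⟩ := exit_edge p hx0 hy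
  obtain ⟨b, hb, rfl⟩ := Finset.mem_image.1 hs
  exact ⟨b, hb, v, hv, hadj⟩

/-- In a tree, an empty node has at most one occupied neighbor (given the
occupied set is walk-connected). -/
lemma unique_nbr {G : SimpleGraph V} (htree : G.IsTree) {S : Finset V}
    (hconn : ∀ x ∈ S, ∀ y ∈ S, ∃ p : G.Walk x y, ∀ z ∈ p.support, z ∈ S)
    {w x y : V} (hw : w ∉ S) (hx : x ∈ S) (hy : y ∈ S)
    (hwx : G.Adj w x) (hwy : G.Adj w y) : x = y := by
  by_contra hne
  obtain ⟨p, hp⟩ := hconn x hx y hy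
  have hq : ∀ z ∈ (p.toPath : G.Walk x y).support, z ∈ S := fun z hz =>
    hp z (SimpleGraph.Walk.support_toPath_subset p hz)
  have hxw : x ≠ w := fun h => hw (h ▸ hx)
  have hyw : y ≠ w := fun h => hw (h ▸ hy)
  let p2 : G.Walk x y := SimpleGraph.Walk.cons hwx.symm (SimpleGraph.Walk.cons hwy .nil)
  have hp2 : p2.IsPath := by
    rw [SimpleGraph.Walk.isPath_def]
    simp [p2, SimpleGraph.Walk.support_cons]
    exact ⟨⟨hxw, hne⟩, hyw.symm⟩
  have huniq := SimpleGraph.isAcyclic_iff_path_unique.1 htree.IsAcyclic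
  have heq := huniq p.toPath ⟨p2, hp2⟩
  have hwmem : w ∈ (p.toPath : G.Walk x y).support := by
    rw [heq]
    simp [p2, SimpleGraph.Walk.support_cons]
  exact hw (hq w hwmem)

section ext

variable {G : SimpleGraph V} {t : A → T} {B : Finset A} {g : A → V}
variable {a : A} {v : V}

lemma update_eq_on (ha : a ∉ B) : ∀ b ∈ B, Function.update g a v b = g b := by
  intro b hb
  refine Function.update_of_ne (fun h => ha ?_) _ _
  rw [← h]; exact hb

lemma image_update (ha : a ∉ B) :
    (insert a B).image (Function.update g a v) = insert v (B.image g) := by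
  rw [Finset.image_insert]
  congr 1
  · exact Function.update_self _ _ _
  · exact Finset.image_congr (fun b hb => update_eq_on ha b hb)

lemma happy_mono (ha : a ∉ B) {c : A} (hc : c ∈ B) (h : Happy G t B g c) :
    Happy G t (insert a B) (Function.update g a v) c := by
  obtain ⟨b, hb, hadj, hne⟩ := h
  exact ⟨b, Finset.mem_insert_of_mem hb,
    by rw [update_eq_on ha c hc, update_eq_on ha b hb]; exact hadj, hne⟩

lemma inj_update (hinj : Set.InjOn g ↑B) (ha : a ∉ B) (hv : v ∉ B.image g) :
    Set.InjOn (Function.update g a v) ↑(insert a B) := by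
  intro x hx y hy hxy
  simp only [Finset.coe_insert, Set.mem_insert_iff, Finset.mem_coe] at hx hy
  rcases hx with rfl | hx <;> rcases hy with rfl | hy
  · rfl
  · exfalso; apply hv
    rw [Function.update_self, update_eq_on ha y hy] at hxy
    exact hxy ▸ Finset.mem_image_of_mem g hy
  · exfalso; apply hv
    rw [Function.update_self, update_eq_on ha x hx] at hxy
    exact hxy ▸ Finset.mem_image_of_mem g hx
  · rw [update_eq_on ha x hx, update_eq_on ha y hy] at hxy
    exact hinj hx hy hxy

lemma conn_update (ha : a ∉ B)
    (hconn : ∀ x ∈ B.image g, ∀ y ∈ B.image g,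
      ∃ p : G.Walk x y, ∀ z ∈ p.support, z ∈ B.image g)
    {b : A} (hb : b ∈ B) (hadj : G.Adj (g b) v) :
    ∀ x ∈ (insert a B).image (Function.update g a v),
    ∀ y ∈ (insert a B).image (Function.update g a v),
      ∃ p : G.Walk x y, ∀ z ∈ p.support,
        z ∈ (insert a B).image (Function.update g a v) := by
  have himg := image_update (g := g) (v := v) ha
  rw [himg]
  have hgb : g b ∈ B.image g := Finset.mem_image_of_mem g hb
  have cov : ∀ x ∈ insert v (B.image g),
      ∃ p : G.Walk v x, ∀ z ∈ p.support, z ∈ insert v (B.image g) := by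
    intro x hx
    rcases Finset.mem_insert.1 hx with h | hx
    · subst h
      exact ⟨SimpleGraph.Walk.nil, by simp⟩
    · obtain ⟨q, hq⟩ := hconn (g b) hgb x hx
      refine ⟨SimpleGraph.Walk.cons hadj.symm q, ?_⟩
      intro z hz
      rw [SimpleGraph.Walk.support_cons] at hz
      rcases List.mem_cons.1 hz with rfl | hz
      · exact Finset.mem_insert_self _ _
      · exact Finset.mem_insert_of_mem (hq z hz)
  intro x hx y hy
  obtain ⟨p1, h1⟩ := cov x hx
  obtain ⟨p2, h2⟩ := cov y hy
  refine ⟨p1.reverse.append p2, ?_⟩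
  intro z hz
  rw [SimpleGraph.Walk.mem_support_append_iff] at hz
  rcases hz with hz | hz
  · rw [SimpleGraph.Walk.support_reverse] at hz
    exact h1 z (List.mem_reverse.1 hz)
  · exact h2 z hz

end ext

section engine

variable {G : SimpleGraph V} {t : A → T}

/-- One step of the greedy process. -/
lemma step [Fintype V] [Fintype A]
    (hpre : G.Preconnected) (hcard : Fintype.card A < Fintype.card V)
    {B : Finset A} {g : A → V} (hinv : Inv G t B g) (hBne : B ≠ Finset.univ) :
    ∃ a ∉ B, ∃ g' : A → V, Inv G t (insert a B) g' := by
  obtain ⟨a0, ha0⟩ : ∃ a, a ∉ B := by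
    by_contra h
    push_neg at h
    exact hBne (Finset.eq_univ_iff_forall.2 h)
  obtain ⟨b, hb, v, hv, hadj⟩ := border_exists hpre hcard hinv.nonempty
  have base : ∀ (a : A), a ∉ B → ∀ (v' : V), v' ∉ B.image g → ∀ b' ∈ B, G.Adj (g b') v' →
      B.Nonempty ∧ Set.InjOn (Function.update g a v') ↑(insert a B) ∧
      (∀ x ∈ (insert a B).image (Function.update g a v'),
       ∀ y ∈ (insert a B).image (Function.update g a v'),
        ∃ p : G.Walk x y, ∀ z ∈ p.support,
          z ∈ (insert a B).image (Function.update g a v')) := by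
    intro a ha v' hv' b' hb' hadj'
    exact ⟨hinv.nonempty, inj_update hinv.inj ha hv', conn_update ha hinv.conn hb' hadj'⟩
  rcases hinv.mode with hleft | ⟨x, hx1, hx2, hx3⟩
  · by_cases hgood : ∃ a b' v', a ∉ B ∧ b' ∈ B ∧ v' ∉ B.image g ∧
        G.Adj (g b') v' ∧ t b' ≠ t a
    · obtain ⟨a, b', v', ha, hb', hv', hadj', hne⟩ := hgood
      obtain ⟨hne0, hinj', hconn'⟩ := base a ha v' hv' b' hb' hadj'
      refine ⟨a, ha, Function.update g a v', ⟨Finset.insert_nonempty _ _, hinj', hconn', ?_⟩⟩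
      left
      intro c hc
      rcases Finset.mem_insert.1 hc with rfl | hc
      · refine ⟨b', Finset.mem_insert_of_mem hb', ?_, hne⟩
        rw [Function.update_self, update_eq_on ha b' hb']
        exact hadj'.symm
      · exact happy_mono ha hc (hleft c hc)
    · push_neg at hgood
      set x0 := t a0 with hx0
      have hall : ∀ a, a ∉ B → t a = x0 := by
        intro a ha
        have h1 := hgood a b v ha hb hv hadj
        have h2 := hgood a0 b v ha0 hb hv hadj
        rw [← h1, h2]
      have hfront : ∀ c ∈ B, (∃ w, w ∉ B.image g ∧ G.Adj (g c) w) → t c = x0 := by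
        rintro c hc ⟨w, hw, hadjw⟩
        exact hgood a0 c w ha0 hc hw hadjw
      obtain ⟨hne0, hinj', hconn'⟩ := base a0 ha0 v hv b hb hadj
      refine ⟨a0, ha0, Function.update g a0 v,
        ⟨Finset.insert_nonempty _ _, hinj', hconn', ?_⟩⟩
      right
      refine ⟨x0, fun a ha => hall a (fun h => ha (Finset.mem_insert_of_mem h)), ?_, ?_⟩
      · intro c hc
        rcases Finset.mem_insert.1 hc with rfl | hc
        · exact Or.inr rfl
        · exact Or.inl (happy_mono ha0 hc (hleft c hc))
      · intro c hc hcw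
        rw [image_update ha0] at hcw
        obtain ⟨w, hw, hadjw⟩ := hcw
        rcases Finset.mem_insert.1 hc with rfl | hc
        · exact rfl
        · refine hfront c hc ⟨w, fun h => hw (Finset.mem_insert_of_mem h), ?_⟩
          rwa [update_eq_on ha0 c hc] at hadjw
  · obtain ⟨hne0, hinj', hconn'⟩ := base a0 ha0 v hv b hb hadj
    refine ⟨a0, ha0, Function.update g a0 v,
      ⟨Finset.insert_nonempty _ _, hinj', hconn', ?_⟩⟩
    right
    refine ⟨x, fun a ha => hx1 a (fun h => ha (Finset.mem_insert_of_mem h)), ?_, ?_⟩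
    · intro c hc
      rcases Finset.mem_insert.1 hc with rfl | hc
      · exact Or.inr (hx1 c ha0)
      · rcases hx2 c hc with h | h
        · exact Or.inl (happy_mono ha0 hc h)
        · exact Or.inr h
    · intro c hc hcw
      rw [image_update ha0] at hcw
      obtain ⟨w, hw, hadjw⟩ := hcw
      rcases Finset.mem_insert.1 hc with rfl | hc
      · exact hx1 c ha0
      · refine hx3 c hc ⟨w, fun h => hw (Finset.mem_insert_of_mem h), ?_⟩
        rwa [update_eq_on ha0 c hc] at hadjw

/-- The greedy engine: extend any invariant configuration to all agents. -/
lemma engine [Fintype V] [Fintype A]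
    (hpre : G.Preconnected) (hcard : Fintype.card A < Fintype.card V) :
    ∀ (k : ℕ) (B : Finset A) (g : A → V), (Finset.univ \ B).card = k →
      Inv G t B g → ∃ g' : A → V, Inv G t Finset.univ g' := by
  intro k
  induction k with
  | zero =>
    intro B g hk hinv
    have hB : B = Finset.univ := by
      have h := Finset.card_eq_zero.1 hk
      have := Finset.sdiff_eq_empty_iff_subset.1 h
      exact le_antisymm (Finset.subset_univ B) this
    exact ⟨g, hB ▸ hinv⟩
  | succ k ih =>
    intro B g hk hinv
    have hBne : B ≠ Finset.univ := by
      intro h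
      rw [h, Finset.sdiff_self] at hk
      simp at hk
    obtain ⟨a, ha, g', hinv'⟩ := step hpre hcard hinv hBne
    refine ih (insert a B) g' ?_ hinv'
    rw [Finset.sdiff_insert, Finset.card_erase_of_mem (by simp [ha]), hk]
    rfl

end engine

section final

variable [Fintype A] [Fintype T] {G : SimpleGraph V} {t : A → T}

/-- From the completed invariant we obtain an equilibrium. -/
lemma equilibrium_of_inv (htree : G.IsTree) {g : A → V}
    (hinv : Inv G t (Finset.univ : Finset A) g) :
    ∃ σ : A ↪ V, IsEquilibrium G t σ := by
  have hinj : Function.Injective g := by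
    have := hinv.inj
    rw [Finset.coe_univ] at this
    exact Set.injOn_univ.1 this
  refine ⟨⟨g, hinj⟩, ?_⟩
  rintro σ' i ⟨hagree, hempty, hlt⟩
  set σ : A ↪ V := ⟨g, hinj⟩ with hσ
  set w : V := σ' i with hwdef
  have hwe : ∀ j : A, g j ≠ w := fun j => hempty j
  have hwnotin : w ∉ (Finset.univ : Finset A).image g := by
    rw [Finset.mem_image]
    rintro ⟨j, -, hj⟩
    exact hwe j hj
  have huniq : ∀ j1 j2 : A, G.Adj w (g j1) → G.Adj w (g j2) → g j1 = g j2 := by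
    intro j1 j2 h1 h2
    exact unique_nbr htree hinv.conn hwnotin
      (Finset.mem_image_of_mem g (Finset.mem_univ j1))
      (Finset.mem_image_of_mem g (Finset.mem_univ j2)) h1 h2
  have hwit : ∀ c : T, (c ≠ t i ∧ ∃ j : A, G.Adj (σ' i) (σ' j) ∧ t j = c) →
      ∃ j : A, j ≠ i ∧ G.Adj w (g j) ∧ t j = c := by
    rintro c ⟨-, j, hadj, hc⟩
    have hji : j ≠ i := by
      rintro rfl
      exact G.irrefl hadj
    refine ⟨j, hji, ?_, hc⟩
    show G.Adj (σ' i) (σ j)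
    rw [← hagree j hji]
    exact hadj
  by_cases hH : Happy G t Finset.univ g i
  · have h1 : 1 ≤ util G t σ i := by
      obtain ⟨b, -, hadj, hne⟩ := hH
      have hmem : (t b) ∈ {c : T | c ≠ t i ∧ ∃ j : A, G.Adj (σ i) (σ j) ∧ t j = c} :=
        ⟨hne, b, hadj, rfl⟩
      have hpos := (Set.ncard_pos (Set.toFinite _)).2 ⟨t b, hmem⟩
      unfold util
      omega
    have h2 : util G t σ' i ≤ 1 := by
      have hsub : {c : T | c ≠ t i ∧ ∃ j : A, G.Adj (σ' i) (σ' j) ∧ t j = c}.Subsingleton := by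
        intro c1 hc1 c2 hc2
        obtain ⟨j1, hj1, hadj1, hc1'⟩ := hwit c1 hc1
        obtain ⟨j2, hj2, hadj2, hc2'⟩ := hwit c2 hc2
        have heq := huniq j1 j2 hadj1 hadj2
        have hj12 : j1 = j2 := hinj heq
        rw [← hc1', ← hc2', hj12]
      rcases Set.eq_empty_or_nonempty
          {c : T | c ≠ t i ∧ ∃ j : A, G.Adj (σ' i) (σ' j) ∧ t j = c} with h | ⟨c0, hc0⟩
      · unfold util; rw [h]; simp
      · have hsing : {c : T | c ≠ t i ∧ ∃ j : A, G.Adj (σ' i) (σ' j) ∧ t j = c} = {c0} := by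
          apply Set.eq_singleton_iff_unique_mem.2
          exact ⟨hc0, fun c hc => hsub hc hc0⟩
        unfold util; rw [hsing]; simp
    omega
  · rcases hinv.mode with hleft | ⟨x, hx1, hx2, hx3⟩
    · exact hH (hleft i (Finset.mem_univ i))
    · have hix : t i = x := (hx2 i (Finset.mem_univ i)).resolve_left hH
      have hzero : util G t σ' i = 0 := by
        have hemp : {c : T | c ≠ t i ∧ ∃ j : A, G.Adj (σ' i) (σ' j) ∧ t j = c} = ∅ := by
          rw [Set.eq_empty_iff_forall_notMem]
          rintro c hc
          obtain ⟨j, hji, hadj, hc'⟩ := hwit c hc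
          have hjx : t j = x := hx3 j (Finset.mem_univ j) ⟨w, hwnotin, hadj.symm⟩
          exact hc.1 (by rw [← hc', hjx, ← hix])
        unfold util; rw [hemp]; simp
      omega

end final

end Stmt6Aux

/-- Every jump game whose graph is a tree admits an equilibrium
assignment. -/
theorem stmt_6 {V A T : Type*} [Fintype V] [Fintype A] [Fintype T]
    (G : SimpleGraph V) (htree : G.IsTree)
    (hA : 2 ≤ Fintype.card A) (hVA : Fintype.card A < Fintype.card V)
    (t : A → T) (ht : Function.Surjective t) (hT : 2 ≤ Fintype.card T) :
    ∃ σ : A ↪ V, IsEquilibrium G t σ := by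
  classical
  -- two agents of different types
  obtain ⟨τ1, τ2, hτ⟩ := Fintype.exists_pair_of_one_lt_card (by omega : 1 < Fintype.card T)
  obtain ⟨a1, ha1⟩ := ht τ1
  obtain ⟨a2, ha2⟩ := ht τ2
  have ha12 : a1 ≠ a2 := by
    rintro rfl
    exact hτ (ha1 ▸ ha2 ▸ rfl)
  -- an edge of the tree
  have hedge : ∃ u v : V, G.Adj u v := by
    have key : ∀ {x y : V} (_ : G.Walk x y), x ≠ y → ∃ u v : V, G.Adj u v := by
      intro x y p
      induction p with
      | nil => intro h; exact absurd rfl h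
      | cons h q ih => intro _; exact ⟨_, _, h⟩
    obtain ⟨x, y, hxy⟩ := Fintype.exists_pair_of_one_lt_card
      (by omega : 1 < Fintype.card V)
    obtain ⟨p⟩ := htree.isConnected.preconnected x y
    exact key p hxy
  obtain ⟨u, v, hadj⟩ := hedge
  -- initial configuration
  set g0 : A → V := fun a => if a = a1 then u else v with hg0
  have hga1 : g0 a1 = u := by simp [hg0]
  have hga2 : g0 a2 = v := by
    rw [hg0]
    exact if_neg (fun h => ha12 h.symm)
  set B0 : Finset A := {a1, a2} with hB0
  have ha1B : a1 ∈ B0 := by simp [hB0]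
  have ha2B : a2 ∈ B0 := by simp [hB0]
  have himg : B0.image g0 = {u, v} := by
    rw [hB0]
    rw [Finset.image_insert, Finset.image_singleton, hga1, hga2]
  have hinv0 : Stmt6Aux.Inv G t B0 g0 := by
    refine ⟨⟨a1, ha1B⟩, ?_, ?_, ?_⟩
    · intro x hx y hy hxy
      simp only [hB0, Finset.coe_insert, Set.mem_insert_iff, Finset.coe_singleton,
        Set.mem_singleton_iff] at hx hy
      rcases hx with rfl | rfl <;> rcases hy with rfl | rfl
      · rfl
      · rw [hga1, hga2] at hxy; exact absurd hxy hadj.ne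
      · rw [hga1, hga2] at hxy; exact absurd hxy.symm hadj.ne
      · rfl
    · rw [himg]
      have hcov : ∀ x ∈ ({u, v} : Finset V),
          ∃ p : G.Walk u x, ∀ z ∈ p.support, z ∈ ({u, v} : Finset V) := by
        intro x hx
        rcases Finset.mem_insert.1 hx with h | h
        · subst h; exact ⟨SimpleGraph.Walk.nil, by simp⟩
        · rw [Finset.mem_singleton] at h
          subst h
          refine ⟨SimpleGraph.Walk.cons hadj .nil, ?_⟩
          intro z hz
          simp only [SimpleGraph.Walk.support_cons, SimpleGraph.Walk.support_nil] at hz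
          rcases List.mem_cons.1 hz with rfl | hz
          · simp
          · simp only [List.mem_singleton] at hz
            subst hz; simp
      intro x hx y hy
      obtain ⟨p1, h1⟩ := hcov x hx
      obtain ⟨p2, h2⟩ := hcov y hy
      refine ⟨p1.reverse.append p2, ?_⟩
      intro z hz
      rw [SimpleGraph.Walk.mem_support_append_iff] at hz
      rcases hz with hz | hz
      · rw [SimpleGraph.Walk.support_reverse] at hz
        exact h1 z (List.mem_reverse.1 hz)
      · exact h2 z hz
    · left
      intro a ha
      rcases Finset.mem_insert.1 ha with rfl | ha
      · refine ⟨a2, ha2B, ?_, ?_⟩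
        · rw [hga1, hga2]; exact hadj
        · rw [ha1, ha2]; exact fun h => hτ h.symm
      · rw [Finset.mem_singleton] at ha
        subst ha
        refine ⟨a1, ha1B, ?_, ?_⟩
        · rw [hga1, hga2]; exact hadj.symm
        · rw [ha1, ha2]; exact hτ
  obtain ⟨g', hinv'⟩ := Stmt6Aux.engine htree.isConnected.preconnected hVA
    (Finset.univ \ B0).card B0 g0 rfl hinv0
  exact Stmt6Aux.equilibrium_of_inv htree hinv'
end

section
/- In any jump game (on a finite simple connected graph with at least one empty node), every equilibrium assignment v satisfies SW(v) ≥ n − max_T n_T + 1, where the maximum is over the k types. -/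
open Finset

variable {V : Type*} {A : Type*} {T : Type*}

open Classical in
noncomputable def jumpEmb (σ : A ↪ V) (i : A) (w : V) (hw : IsEmptyNode σ w) : A ↪ V :=
  ⟨Function.update σ i w, by
    intro a b hab
    by_cases ha : a = i <;> by_cases hb : b = i
    · exact ha.trans hb.symm
    · rw [ha, Function.update_self, Function.update_of_ne hb] at hab
      exact absurd hab.symm (hw b)
    · rw [hb, Function.update_self, Function.update_of_ne ha] at hab
      exact absurd hab (hw a)
    · rw [Function.update_of_ne ha, Function.update_of_ne hb] at hab
      exact σ.injective hab⟩

lemma key_lemma [Fintype T] (G : SimpleGraph V) (t : A → T) (σ : A ↪ V)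
    (heq : IsEquilibrium G t σ) {i : A} (hi : util G t σ i = 0)
    {w : V} (hw : IsEmptyNode σ w) {j : A} (hadj : G.Adj w (σ j)) :
    t j = t i := by
  classical
  by_contra hne
  have hji : j ≠ i := fun h => hne (by rw [h])
  set σ' := jumpEmb σ i w hw with hσ'
  have happ : ∀ a, (σ' : A → V) a = Function.update σ i w a := fun a => rfl
  have hi' : (σ' : A → V) i = w := by rw [happ, Function.update_self]
  have hj' : (σ' : A → V) j = σ j := by rw [happ, Function.update_of_ne hji]
  apply heq σ' i
  refine ⟨fun a ha => by rw [happ, Function.update_of_ne ha], by rw [hi']; exact hw, ?_⟩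
  rw [hi]
  have hne' : ({c : T | c ≠ t i ∧ ∃ j' : A, G.Adj (σ' i) (σ' j') ∧ t j' = c}).Nonempty :=
    ⟨t j, hne, j, by rw [hi', hj']; exact hadj, rfl⟩
  exact (Set.ncard_pos (Set.toFinite _)).mpr hne'

lemma closed_mem (G : SimpleGraph V) (hG : G.Connected) (S : Set V)
    (hcl : ∀ x y, x ∈ S → G.Adj x y → y ∈ S) {x₀ : V} (hx : x₀ ∈ S) (y : V) : y ∈ S := by
  obtain ⟨p⟩ := hG.preconnected x₀ y
  have main : ∀ {a b : V}, G.Walk a b → a ∈ S → b ∈ S := by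
    intro a b p
    induction p with
    | nil => exact id
    | cons h p ih => exact fun ha => ih (hcl _ _ ha h)
  exact main p hx

lemma exists_empty [Fintype V] [Fintype A] {σ : A ↪ V}
    (hVA : Fintype.card A < Fintype.card V) : ∃ w, IsEmptyNode σ w := by
  by_contra h
  push_neg at h
  have hsurj : Function.Surjective σ := by
    intro w
    have := h w
    unfold IsEmptyNode at this
    push_neg at this
    exact this
  exact absurd (Fintype.card_le_of_surjective σ hsurj) (by omega)

/-- In any jump game, every equilibrium assignment `σ` satisfies
`SW(σ) ≥ n − max_T n_T + 1`. -/
theorem stmt_9 {V A T : Type*} [Fintype V] [Fintype A] [Fintype T]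
    (G : SimpleGraph V) (hG : G.Connected)
    (hA : 2 ≤ Fintype.card A) (hVA : Fintype.card A < Fintype.card V)
    (t : A → T) (ht : Function.Surjective t) (hT : 2 ≤ Fintype.card T)
    (σ : A ↪ V) (heq : IsEquilibrium G t σ) :
    Fintype.card A - Finset.univ.sup (fun c : T => typeCount t c) + 1 ≤
      socialWelfare G t σ := by
  classical
  have hAne : Nonempty A := Fintype.card_pos_iff.mp (by omega)
  by_cases h0 : ∀ i, 1 ≤ util G t σ i
  · -- every agent has positive utility
    have hSW : Fintype.card A ≤ socialWelfare G t σ := by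
      calc Fintype.card A = ∑ _i : A, 1 := by simp
        _ ≤ ∑ i : A, util G t σ i := Finset.sum_le_sum fun i _ => h0 i
    obtain ⟨i⟩ := hAne
    have h1 : 1 ≤ typeCount t (t i) :=
      (Set.ncard_pos (Set.toFinite _)).mpr ⟨i, rfl⟩
    have h2 : typeCount t (t i) ≤ Finset.univ.sup (fun c : T => typeCount t c) :=
      Finset.le_sup (Finset.mem_univ (t i))
    unfold socialWelfare at hSW ⊢
    omega
  · push_neg at h0
    obtain ⟨i₀, hi₀'⟩ := h0
    have hi₀ : util G t σ i₀ = 0 := by omega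
    obtain ⟨w₀, hw₀⟩ := exists_empty (σ := σ) hVA
    -- Step a: all zero-utility agents have type t i₀
    have stepa : ∀ a, util G t σ a = 0 → t a = t i₀ := by
      intro a ha
      by_contra hne
      have hclosed : ∀ x y, x ∈ {w : V | IsEmptyNode σ w} → G.Adj x y →
          y ∈ {w : V | IsEmptyNode σ w} := by
        intro x y hx hxy j hj
        have h1 := key_lemma G t σ heq hi₀ hx (hj ▸ hxy)
        have h2 := key_lemma G t σ heq ha hx (hj ▸ hxy)
        exact hne (h2.symm.trans h1)
      have := closed_mem G hG _ hclosed hw₀ (σ i₀)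
      exact this i₀ rfl
    -- Step b: some agent of type t i₀ has positive utility
    have stepb : ∃ j, t j = t i₀ ∧ 1 ≤ util G t σ j := by
      set S : Set V := {w | IsEmptyNode σ w ∨ ∃ j, σ j = w ∧ t j = t i₀} with hS
      by_cases hcl : ∀ x y, x ∈ S → G.Adj x y → y ∈ S
      · exfalso
        obtain ⟨c, hc⟩ := Fintype.exists_ne_of_one_lt_card (by omega) (t i₀)
        obtain ⟨a, ha⟩ := ht c
        have hmem : σ a ∈ S := closed_mem G hG S hcl (Or.inl hw₀) (σ a)
        rcases hmem with hemp | ⟨j, hj, hjt⟩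
        · exact hemp a rfl
        · exact hc (ha ▸ (σ.injective hj ▸ hjt))
      · push_neg at hcl
        obtain ⟨x, y, hxS, hxy, hyS⟩ := hcl
        have hy1 : ¬ IsEmptyNode σ y := fun h => hyS (Or.inl h)
        unfold IsEmptyNode at hy1
        push_neg at hy1
        obtain ⟨a, ha⟩ := hy1
        have hta : t a ≠ t i₀ := fun h => hyS (Or.inr ⟨a, ha, h⟩)
        rcases hxS with hemp | ⟨j, hj, hjt⟩
        · exact absurd (key_lemma G t σ heq hi₀ hemp (ha ▸ hxy)) hta
        · refine ⟨j, hjt, ?_⟩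
          have hadj : G.Adj (σ j) (σ a) := by rw [hj, ha]; exact hxy
          exact (Set.ncard_pos (Set.toFinite _)).mpr
            ⟨t a, by rw [hjt]; exact hta, a, hadj, rfl⟩
    obtain ⟨j, hjt, hj1⟩ := stepb
    -- counting
    have hpt : ∀ i : A, (if t i ≠ t i₀ ∨ i = j then 1 else 0) ≤ util G t σ i := by
      intro i
      split
      · rename_i h
        rcases h with h | rfl
        · by_contra hlt
          exact h (stepa i (by omega))
        · exact hj1
      · exact Nat.zero_le _
    have hSW : (Finset.univ.filter (fun i => ¬ t i = t i₀ ∨ i = j)).card ≤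
        socialWelfare G t σ := by
      rw [Finset.card_filter, socialWelfare]
      exact Finset.sum_le_sum fun i _ => hpt i
    have hins : Finset.univ.filter (fun i => ¬ t i = t i₀ ∨ i = j) =
        insert j (Finset.univ.filter (fun i => ¬ t i = t i₀)) := by
      ext i
      simp only [Finset.mem_filter, Finset.mem_univ, true_and, Finset.mem_insert]
      tauto
    have hjnot : j ∉ Finset.univ.filter (fun i => ¬ t i = t i₀) := by simp [hjt]
    have hcard : (Finset.univ.filter (fun i => ¬ t i = t i₀ ∨ i = j)).card =
        (Finset.univ.filter (fun i => ¬ t i = t i₀)).card + 1 := by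
      rw [hins, Finset.card_insert_of_notMem hjnot]
    have hpart := Finset.card_filter_add_card_filter_not
      (s := (Finset.univ : Finset A)) (p := fun i => t i = t i₀)
    have htc : typeCount t (t i₀) = (Finset.univ.filter (fun i => t i = t i₀)).card := by
      rw [typeCount, Set.ncard_eq_toFinset_card']
      simp
    have hle : typeCount t (t i₀) ≤ Finset.univ.sup (fun c : T => typeCount t c) :=
      Finset.le_sup (Finset.mem_univ (t i₀))
    rw [Finset.card_univ] at hpart
    omega
end

section
/- In any jump game with symmetric types (on a finite simple connected graph with at least one empty node), for every equilibrium assignment v and every assignment w, SW(w) ≤ k · SW(v); that is, for symmetric types the price of anarchy with respect to the social welfare is at most k. -/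
open Finset

variable {V : Type*} {A : Type*} {T : Type*}

lemma util_pos [Fintype T] {G : SimpleGraph V} {t : A → T} {σ : A ↪ V} {i j : A}
    (hadj : G.Adj (σ i) (σ j)) (hne : t j ≠ t i) : 1 ≤ util G t σ i := by
  rw [util, Nat.succ_le_iff, Set.ncard_pos]
  exact ⟨t j, hne, j, hadj, rfl⟩

lemma util_le [Fintype T] (G : SimpleGraph V) (t : A → T) (σ : A ↪ V) (i : A) :
    util G t σ i ≤ Fintype.card T - 1 := by
  have hsub : {c : T | c ≠ t i ∧ ∃ j : A, G.Adj (σ i) (σ j) ∧ t j = c} ⊆ ({t i}ᶜ : Set T) :=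
    fun c hc => hc.1
  have h1 := Set.ncard_le_ncard hsub (Set.toFinite _)
  have h2 : ({t i} : Set T).ncard + ({t i}ᶜ : Set T).ncard = Nat.card T :=
    Set.ncard_add_ncard_compl _
  rw [Set.ncard_singleton, Nat.card_eq_fintype_card] at h2
  rw [util]
  omega

lemma exists_empty_adj [Nonempty A] {G : SimpleGraph V} (hG : G.Connected)
    {v : A ↪ V} {u : V} (hu : IsEmptyNode v u) :
    ∃ u' j, IsEmptyNode v u' ∧ G.Adj u' (v j) := by
  obtain ⟨i⟩ := ‹Nonempty A›
  obtain ⟨p⟩ := hG u (v i)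
  clear hG
  suffices h : ∀ (a b : V), G.Walk a b → IsEmptyNode v a → (∃ j, v j = b) →
      ∃ u' j, IsEmptyNode v u' ∧ G.Adj u' (v j) from h u (v i) p hu ⟨i, rfl⟩
  intro a b p
  induction p with
  | nil =>
    rintro ha ⟨j, hj⟩
    exact absurd hj (ha j)
  | @cons x y z h p ih =>
    intro ha hb
    by_cases hy : ∃ j, v j = y
    · obtain ⟨j, rfl⟩ := hy
      exact ⟨x, j, ha, h⟩
    · push_neg at hy
      exact ih hy hb

lemma zero_type [Fintype T] {G : SimpleGraph V} {t : A → T} {v : A ↪ V}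
    (heq : IsEquilibrium G t v) {i : A} (hi : util G t v i = 0)
    {u : V} (hu : IsEmptyNode v u) {j : A} (hj : j ≠ i)
    (hadj : G.Adj u (v j)) : t j = t i := by
  classical
  by_contra hne
  have hinj : Function.Injective (Function.update v i u) := by
    intro a b hab
    by_cases ha : a = i <;> by_cases hb : b = i
    · rw [ha, hb]
    · rw [ha, Function.update_self, Function.update_of_ne hb] at hab
      exact absurd hab.symm (hu b)
    · rw [hb, Function.update_self, Function.update_of_ne ha] at hab
      exact absurd hab (hu a)
    · rw [Function.update_of_ne ha, Function.update_of_ne hb] at hab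
      exact v.injective hab
  set σ' : A ↪ V := ⟨Function.update v i u, hinj⟩ with hσ'
  have hσ'i : σ' i = u := Function.update_self i u v
  have hσ'j : ∀ a : A, a ≠ i → σ' a = v a := fun a ha => Function.update_of_ne ha u v
  refine heq σ' i ⟨hσ'j, ?_, ?_⟩
  · rw [hσ'i]; exact hu
  · rw [hi]
    have : G.Adj (σ' i) (σ' j) := by rw [hσ'i, hσ'j j hj]; exact hadj
    exact util_pos this hne

/-- In any jump game with symmetric types, for every equilibrium
`v` and every assignment `w`, `SW(w) ≤ k · SW(v)`; i.e. for symmetric types the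
price of anarchy w.r.t. the social welfare is at most k. -/
theorem stmt_12 {V A T : Type*} [Fintype V] [Fintype A] [Fintype T]
    (G : SimpleGraph V) (hG : G.Connected)
    (hA : 2 ≤ Fintype.card A) (hVA : Fintype.card A < Fintype.card V)
    (t : A → T) (ht : Function.Surjective t) (hT : 2 ≤ Fintype.card T)
    (hsym : ∀ c : T, Fintype.card T * typeCount t c = Fintype.card A)
    (v : A ↪ V) (heq : IsEquilibrium G t v) (w : A ↪ V) :
    socialWelfare G t w ≤ Fintype.card T * socialWelfare G t v := by
  classical
  set n := Fintype.card A with hn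
  set k := Fintype.card T with hk
  have hAne : Nonempty A := Fintype.card_pos_iff.mp (by omega)
  -- there is an empty node
  obtain ⟨u, hu⟩ : ∃ u : V, IsEmptyNode v u := by
    by_contra h
    push_neg at h
    have hsurj : Function.Surjective v := by
      intro x
      have hx := h x
      unfold IsEmptyNode at hx
      push_neg at hx
      exact hx
    exact absurd (Fintype.card_le_of_surjective v hsurj) (by omega)
  obtain ⟨u', j₀, hu', hadj₀⟩ := exists_empty_adj hG hu
  -- all zero-utility agents have the same type
  have hsame : ∀ i i', util G t v i = 0 → util G t v i' = 0 → t i = t i' := by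
    intro i i' hi hi'
    by_contra hne
    have hii' : i ≠ i' := fun h => hne (h ▸ rfl)
    by_cases hji : j₀ = i
    · subst hji
      exact hne (zero_type heq hi' hu' hii' hadj₀)
    · have h1 : t j₀ = t i := zero_type heq hi hu' hji hadj₀
      by_cases hji' : j₀ = i'
      · subst hji'
        exact hne h1.symm
      · exact hne (h1.symm.trans (zero_type heq hi' hu' hji' hadj₀))
  -- counting
  set Z : Finset A := Finset.univ.filter (fun i => util G t v i = 0) with hZ
  have hkz : k * Z.card ≤ n := by
    rcases Z.eq_empty_or_nonempty with h | ⟨i₀, hi₀⟩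
    · simp [h]
    · have hi₀' : util G t v i₀ = 0 := (Finset.mem_filter.mp hi₀).2
      have hcard : Z.card ≤ typeCount t (t i₀) := by
        have hset : {i : A | t i = t i₀} =
            ↑(Finset.univ.filter (fun i => t i = t i₀)) := by ext x; simp
        rw [typeCount, hset, Set.ncard_coe_finset]
        apply Finset.card_le_card
        intro i hi
        simp only [Finset.mem_filter, Finset.mem_univ, true_and]
        exact hsame i i₀ ((Finset.mem_filter.mp hi).2) hi₀'
      calc k * Z.card ≤ k * typeCount t (t i₀) := Nat.mul_le_mul_left _ hcard
        _ = n := hsym _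
  have hSW : n ≤ socialWelfare G t v + Z.card := by
    have h1 : Zᶜ.card ≤ ∑ i ∈ Zᶜ, util G t v i := by
      calc Zᶜ.card = ∑ _i ∈ Zᶜ, 1 := by simp
        _ ≤ ∑ i ∈ Zᶜ, util G t v i := by
          apply Finset.sum_le_sum
          intro i hi
          have : util G t v i ≠ 0 := by
            simp only [hZ, Finset.mem_compl, Finset.mem_filter, Finset.mem_univ,
              true_and] at hi
            exact hi
          omega
    have h2 : ∑ i ∈ Zᶜ, util G t v i ≤ socialWelfare G t v :=
      Finset.sum_le_sum_of_subset (Finset.subset_univ _)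
    have h3 : Z.card + Zᶜ.card = n := Finset.card_add_card_compl Z
    omega
  have hupper : socialWelfare G t w ≤ n * (k - 1) := by
    calc socialWelfare G t w ≤ ∑ _i : A, (k - 1) :=
          Finset.sum_le_sum (fun i _ => util_le G t w i)
      _ = n * (k - 1) := by simp [hn, mul_comm]
  have hk1 : 1 ≤ k := by omega
  have key : socialWelfare G t w + n ≤ k * socialWelfare G t v + n := by
    calc socialWelfare G t w + n ≤ n * (k - 1) + n := by omega
      _ = n * k := by
        have : k - 1 + 1 = k := Nat.succ_pred_eq_of_pos hk1
        calc n * (k - 1) + n = n * (k - 1 + 1) := by ring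
          _ = n * k := by rw [this]
      _ = k * n := mul_comm _ _
      _ ≤ k * (socialWelfare G t v + Z.card) := Nat.mul_le_mul_left _ hSW
      _ = k * socialWelfare G t v + k * Z.card := mul_add _ _ _
      _ ≤ k * socialWelfare G t v + n := by omega
  omega
end

section
/- In any jump game with exactly k = 2 symmetric types on a finite simple connected graph of maximum degree at most 2 (with at least one empty node), every equilibrium assignment v satisfies 4·SW(v) ≥ 3n; since every assignment w satisfies SW(w) ≤ n, the price of anarchy with respect to the social welfare is at most 4/3 (and there are instances attaining this bound). -/
open Finset

variable {V : Type*} {A : Type*} {T : Type*}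

/- ### Auxiliary lemmas -/

lemma one_le_util_iff [Finite T] (G : SimpleGraph V) (t : A → T) (σ : A ↪ V) (i : A) :
    1 ≤ util G t σ i ↔ ∃ j : A, G.Adj (σ i) (σ j) ∧ t j ≠ t i := by
  unfold util
  rw [Nat.one_le_iff_ne_zero, ← Nat.pos_iff_ne_zero, Set.ncard_pos (Set.toFinite _)]
  constructor
  · rintro ⟨c, hc, j, hadj, hj⟩
    exact ⟨j, hadj, hj ▸ hc⟩
  · rintro ⟨j, hadj, hj⟩
    exact ⟨t j, hj, j, hadj, rfl⟩

lemma util_le_one (htwo : ∀ a : T, ∃! b : T, b ≠ a)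
    (G : SimpleGraph V) (t : A → T) (σ : A ↪ V) (i : A) :
    util G t σ i ≤ 1 := by
  obtain ⟨b, _, hbu⟩ := htwo (t i)
  have hsub : {c : T | c ≠ t i ∧ ∃ j : A, G.Adj (σ i) (σ j) ∧ t j = c} ⊆ {b} := by
    rintro c ⟨hc, -⟩
    exact hbu c hc
  calc util G t σ i ≤ ({b} : Set T).ncard :=
        Set.ncard_le_ncard hsub (Set.finite_singleton b)
    _ = 1 := Set.ncard_singleton b

/-- In an equilibrium no agent with zero utility can have an empty node that
is adjacent to an agent of a different type. -/
lemma equil_no_jump [DecidableEq A] [Finite T] (G : SimpleGraph V) (t : A → T) (σ : A ↪ V)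
    (heq : IsEquilibrium G t σ) (i : A) (hu0 : util G t σ i = 0)
    (w : V) (hw : IsEmptyNode σ w)
    (j : A) (hadj : G.Adj w (σ j)) (hne : t j ≠ t i) : False := by
  have hji : j ≠ i := fun h => hne (by rw [h])
  set f : A → V := Function.update (⇑σ) i w with hf
  have hfi : f i = w := Function.update_self i w ⇑σ
  have hfne : ∀ a : A, a ≠ i → f a = σ a := fun a ha => Function.update_of_ne ha w ⇑σ
  have hinj : Function.Injective f := by
    intro a b hab
    by_cases ha : a = i <;> by_cases hb : b = i
    · rw [ha, hb]
    · rw [ha, hfi, hfne b hb] at hab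
      exact absurd hab.symm (hw b)
    · rw [hb, hfi, hfne a ha] at hab
      exact absurd hab (hw a)
    · rw [hfne a ha, hfne b hb] at hab
      exact σ.injective hab
  refine heq ⟨f, hinj⟩ i ⟨?_, ?_, ?_⟩
  · intro j' hj'
    exact Function.update_of_ne hj' w ⇑σ
  · show IsEmptyNode σ (f i)
    rw [hfi]
    exact hw
  · rw [hu0]
    have h1 : 1 ≤ util G t ⟨f, hinj⟩ i := by
      rw [one_le_util_iff]
      refine ⟨j, ?_, hne⟩
      show G.Adj (f i) (f j)
      rw [hfi, show f j = σ j from Function.update_of_ne hji w ⇑σ]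
      exact hadj
    omega

/-- Along a walk from a vertex satisfying `P` to one not satisfying `P` there
is an edge crossing the boundary. -/
lemma walk_boundary {G : SimpleGraph V} (P : V → Prop) {u x : V} (p : G.Walk u x) :
    P u → ¬ P x → ∃ a b : V, G.Adj a b ∧ P a ∧ ¬ P b := by
  induction p with
  | nil => intro hu hx; exact absurd hu hx
  | @cons a b c h q ih =>
    intro hu hx
    by_cases hb : P b
    · exact ih hb hx
    · exact ⟨a, b, h, hu, hb⟩

/-- With k = 2 symmetric types on a graph of maximum degree at
most 2, every equilibrium `v` satisfies `4·SW(v) ≥ 3n`, and every assignment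
`w` satisfies `SW(w) ≤ n`; hence the price of anarchy w.r.t. the social welfare
is at most 4/3. -/
theorem stmt_13 {V A T : Type*} [Fintype V] [Fintype A] [Fintype T]
    (G : SimpleGraph V) (hG : G.Connected)
    (hdeg : ∀ u : V, (G.neighborSet u).ncard ≤ 2)
    (hA : 2 ≤ Fintype.card A) (hVA : Fintype.card A < Fintype.card V)
    (t : A → T) (ht : Function.Surjective t) (hk : Fintype.card T = 2)
    (hsym : ∀ c : T, Fintype.card T * typeCount t c = Fintype.card A) :
    (∀ v : A ↪ V, IsEquilibrium G t v →
        3 * Fintype.card A ≤ 4 * socialWelfare G t v) ∧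
    (∀ w : A ↪ V, socialWelfare G t w ≤ Fintype.card A) := by
  classical
  have htwo : ∀ a : T, ∃! b : T, b ≠ a := fun a =>
    (Nat.card_eq_two_iff' a).mp (by rw [Nat.card_eq_fintype_card, hk])
  constructor
  · intro v hv
    by_cases h0 : ∀ i : A, 1 ≤ util G t v i
    · have hle : Fintype.card A ≤ socialWelfare G t v := by
        calc Fintype.card A = ∑ _i : A, 1 := by simp
          _ ≤ ∑ i : A, util G t v i := Finset.sum_le_sum (fun i _ => h0 i)
          _ = socialWelfare G t v := rfl
      omega
    push_neg at h0
    obtain ⟨i₀, hi₀⟩ := h0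
    have hu0 : util G t v i₀ = 0 := by omega
    set R := t i₀ with hR
    -- empty nodes are adjacent only to agents of type R
    have hAkey : ∀ w : V, IsEmptyNode v w → ∀ j : A, G.Adj w (v j) → t j = R := by
      intro w hw j hadj
      by_contra hne
      exact equil_no_jump G t v hv i₀ hu0 w hw j hadj hne
    -- there exists an empty node
    have hempty : ∃ w : V, IsEmptyNode v w := by
      by_contra hc
      push_neg at hc
      have hsurj : Function.Surjective ⇑v := by
        intro w
        have h := hc w
        simp only [IsEmptyNode, not_forall, not_not] at h
        exact h
      exact absurd (Fintype.card_le_of_surjective ⇑v hsurj) (by omega)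
    -- every non-R agent has positive utility
    have hBpos : ∀ b : A, t b ≠ R → 1 ≤ util G t v b := by
      intro b hb
      by_contra hc
      have hub : util G t v b = 0 := by omega
      obtain ⟨w, hw⟩ := hempty
      have hocc : ¬ IsEmptyNode v (v i₀) := fun h => h i₀ rfl
      obtain ⟨a, c, hac, ha, hcn⟩ :=
        walk_boundary (IsEmptyNode v) ((hG.preconnected w (v i₀)).some) hw hocc
      simp only [IsEmptyNode, not_forall, not_not] at hcn
      obtain ⟨j, hj⟩ := hcn
      have hadj : G.Adj a (v j) := hj ▸ hac
      have htj : t j = R := hAkey a ha j hadj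
      have hne : t j ≠ t b := by
        rw [htj]
        exact fun h => hb h.symm
      exact equil_no_jump G t v hv b hub a ha j hadj hne
    -- counting
    set Bs : Finset A := Finset.univ.filter (fun b => t b ≠ R) with hBs
    set Rh : Finset A := Finset.univ.filter (fun r => t r = R ∧ 1 ≤ util G t v r) with hRh
    have hex : ∀ b ∈ Bs, ∃ r : A, G.Adj (v b) (v r) ∧ t r = R := by
      intro b hb
      rw [hBs, Finset.mem_filter] at hb
      obtain ⟨j, hadj, hne⟩ := (one_le_util_iff G t v b).mp (hBpos b hb.2)
      refine ⟨j, hadj, ?_⟩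
      by_contra hjR
      obtain ⟨x, _, hxu⟩ := htwo R
      exact hne ((hxu (t j) hjR).trans (hxu (t b) hb.2).symm)
    choose! g hg1 hg2 using hex
    have himg : Bs.image g ⊆ Rh := by
      intro r hr
      rw [Finset.mem_image] at hr
      obtain ⟨b, hb, rfl⟩ := hr
      rw [hRh, Finset.mem_filter]
      refine ⟨Finset.mem_univ _, hg2 b hb, ?_⟩
      rw [one_le_util_iff]
      refine ⟨b, (hg1 b hb).symm, ?_⟩
      rw [hg2 b hb]
      rw [hBs, Finset.mem_filter] at hb
      exact hb.2
    have hfiber : ∀ r ∈ Bs.image g, (Bs.filter (fun b => g b = r)).card ≤ 2 := by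
      intro r _
      have hmaps : ∀ b ∈ Bs.filter (fun b => g b = r), v b ∈ G.neighborFinset (v r) := by
        intro b hb
        rw [Finset.mem_filter] at hb
        rw [SimpleGraph.mem_neighborFinset]
        exact (hb.2 ▸ hg1 b hb.1).symm
      calc (Bs.filter (fun b => g b = r)).card ≤ (G.neighborFinset (v r)).card :=
            Finset.card_le_card_of_injOn (fun b => v b) hmaps
              (fun a _ b _ h => v.injective h)
        _ ≤ 2 := by
            have hd := hdeg (v r)
            rwa [Set.ncard_eq_toFinset_card'] at hd
    have hcount : Bs.card ≤ 2 * Rh.card := by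
      have himgcard : (Bs.image g).card ≤ Rh.card := Finset.card_le_card himg
      calc Bs.card = ∑ r ∈ Bs.image g, (Bs.filter (fun b => g b = r)).card :=
            Finset.card_eq_sum_card_image g Bs
        _ ≤ ∑ _r ∈ Bs.image g, 2 := Finset.sum_le_sum hfiber
        _ = 2 * (Bs.image g).card := by rw [Finset.sum_const, smul_eq_mul, mul_comm]
        _ ≤ 2 * Rh.card := by omega
    have hdisj : Disjoint Rh Bs := by
      rw [Finset.disjoint_left]
      intro a haR haB
      rw [hRh, Finset.mem_filter] at haR
      rw [hBs, Finset.mem_filter] at haB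
      exact haB.2 haR.2.1
    have hsw : Rh.card + Bs.card ≤ socialWelfare G t v := by
      calc Rh.card + Bs.card = (Rh ∪ Bs).card := (Finset.card_union_of_disjoint hdisj).symm
        _ = ∑ _i ∈ Rh ∪ Bs, 1 := by simp
        _ ≤ ∑ i ∈ Rh ∪ Bs, util G t v i := Finset.sum_le_sum (fun i hi => by
            rcases Finset.mem_union.mp hi with h | h
            · rw [hRh, Finset.mem_filter] at h
              exact h.2.2
            · rw [hBs, Finset.mem_filter] at h
              exact hBpos i h.2)
        _ ≤ ∑ i : A, util G t v i :=
            Finset.sum_le_sum_of_subset (Finset.subset_univ _)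
        _ = socialWelfare G t v := rfl
    obtain ⟨B, hBR, hBu⟩ := htwo R
    have hn : 2 * Bs.card = Fintype.card A := by
      have hs := hsym B
      rw [hk] at hs
      have hset : Bs = Finset.univ.filter (fun i => t i = B) := by
        rw [hBs]
        apply Finset.filter_congr
        intro i _
        constructor
        · intro h
          exact hBu (t i) h
        · intro h
          rw [h]
          exact hBR
      have htc : typeCount t B = (Finset.univ.filter (fun i => t i = B)).card := by
        rw [typeCount, Set.ncard_eq_toFinset_card', Set.toFinset_setOf]
      rw [hset, ← htc]
      exact hs
    omega
  · intro w
    calc socialWelfare G t w = ∑ i : A, util G t w i := rfl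
      _ ≤ ∑ _i : A, 1 := Finset.sum_le_sum (fun i _ => util_le_one htwo G t w i)
      _ = Fintype.card A := by simp
end

section
/- In any jump game with k ≥ 3 symmetric types on a finite simple connected graph of maximum degree at most 2 (with at least one empty node), every equilibrium assignment v satisfies k·SW(v) ≥ n(k−1), and every assignment w satisfies SW(w) ≤ 2n; hence (k−1)·SW(w) ≤ 2k·SW(v), i.e., the price of anarchy with respect to the social welfare is at most 2k/(k−1). -/
open Finset

variable {V : Type*} {A : Type*} {T : Type*}

lemma exists_boundary {V : Type*} {G : SimpleGraph V} (P : V → Prop) {a b : V}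
    (p : G.Walk a b) (ha : P a) (hb : ¬ P b) : ∃ x y, G.Adj x y ∧ P x ∧ ¬ P y := by
  induction p with
  | nil => exact absurd ha hb
  | @cons u v w h q ih =>
    by_cases hc : P v
    · exact ih hc hb
    · exact ⟨u, v, h, ha, hc⟩

lemma util_le_two {V A T : Type*} [Fintype V] [Fintype T] (G : SimpleGraph V)
    (hdeg : ∀ u : V, (G.neighborSet u).ncard ≤ 2)
    (t : A → T) (σ : A ↪ V) (i : A) : util G t σ i ≤ 2 := by
  classical
  refine le_trans ?_ (hdeg (σ i))
  apply Set.ncard_le_ncard_of_injOn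
    (fun c => σ (if h : ∃ j : A, G.Adj (σ i) (σ j) ∧ t j = c then h.choose else i))
  · rintro c ⟨hne, hex⟩
    simp only [dif_pos hex]
    exact hex.choose_spec.1
  · rintro c ⟨-, hex⟩ c' ⟨-, hex'⟩ heq
    simp only [dif_pos hex, dif_pos hex'] at heq
    have h2 := σ.injective heq
    rw [← hex.choose_spec.2, ← hex'.choose_spec.2, h2]

/-- With k ≥ 3 symmetric types on a graph of maximum degree at
most 2, every equilibrium `v` satisfies `k·SW(v) ≥ n(k−1)`, every assignment
`w` satisfies `SW(w) ≤ 2n`, and hence `(k−1)·SW(w) ≤ 2k·SW(v)`. -/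
theorem stmt_14 {V A T : Type*} [Fintype V] [Fintype A] [Fintype T]
    (G : SimpleGraph V) (hG : G.Connected)
    (hdeg : ∀ u : V, (G.neighborSet u).ncard ≤ 2)
    (hA : 2 ≤ Fintype.card A) (hVA : Fintype.card A < Fintype.card V)
    (t : A → T) (ht : Function.Surjective t) (hk : 3 ≤ Fintype.card T)
    (hsym : ∀ c : T, Fintype.card T * typeCount t c = Fintype.card A) :
    (∀ v : A ↪ V, IsEquilibrium G t v →
        Fintype.card A * (Fintype.card T - 1) ≤
          Fintype.card T * socialWelfare G t v) ∧
    (∀ w : A ↪ V, socialWelfare G t w ≤ 2 * Fintype.card A) ∧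
    (∀ v : A ↪ V, IsEquilibrium G t v → ∀ w : A ↪ V,
        (Fintype.card T - 1) * socialWelfare G t w ≤
          2 * Fintype.card T * socialWelfare G t v) := by
  classical
  have hSW2 : ∀ w : A ↪ V, socialWelfare G t w ≤ 2 * Fintype.card A := by
    intro w
    calc socialWelfare G t w ≤ ∑ _i : A, 2 :=
          Finset.sum_le_sum fun i _ => util_le_two G hdeg t w i
      _ = 2 * Fintype.card A := by simp [mul_comm]
  have hEq : ∀ v : A ↪ V, IsEquilibrium G t v →
      Fintype.card A * (Fintype.card T - 1) ≤ Fintype.card T * socialWelfare G t v := by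
    intro v hv
    -- there is an empty node
    have hW : ∃ w : V, IsEmptyNode v w := by
      by_contra h
      push_neg at h
      simp only [IsEmptyNode, not_forall, not_not] at h
      have hsurj : Function.Surjective v := fun w => (h w)
      exact absurd (Fintype.card_le_of_surjective v hsurj) (by omega)
    obtain ⟨w0, hw0⟩ := hW
    have hAne : Nonempty A := Fintype.card_pos_iff.mp (by omega)
    obtain ⟨i0⟩ := hAne
    -- boundary: occupied node adjacent to empty node
    obtain ⟨x, y, hxy, hx, hy⟩ :=
      exists_boundary (G := G) (fun z => ∃ i : A, v i = z)
        ((hG.preconnected (v i0) w0).some) ⟨i0, rfl⟩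
        (fun ⟨i, hi⟩ => hw0 i hi)
    obtain ⟨jstar, rfl⟩ := hx
    have hyempty : IsEmptyNode v y := fun i hi => hy ⟨i, hi⟩
    -- all zero-utility agents have type (t jstar)
    have hzero : ∀ i : A, util G t v i = 0 → t i = t jstar := by
      intro i hi
      by_contra hne
      have hji : jstar ≠ i := fun h => hne (by rw [h])
      set σ' : A ↪ V := ⟨fun a => if a = i then y else v a, by
        intro a b hab
        simp only at hab
        split_ifs at hab with h1 h2 h2
        · rw [h1, h2]
        · exact absurd hab.symm (hyempty b)
        · exact absurd hab (hyempty a)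
        · exact v.injective hab⟩ with hσ'
      have hσ'i : σ' i = y := by rw [hσ']; exact if_pos rfl
      have hσ'j : σ' jstar = v jstar := by rw [hσ']; exact if_neg hji
      apply hv σ' i
      refine ⟨fun j hj => by rw [hσ']; exact if_neg hj, by rw [hσ'i]; exact hyempty, ?_⟩
      rw [hi]
      rw [util]
      rw [Set.ncard_pos (Set.toFinite _)]
      exact ⟨t jstar, fun h => hne h.symm, jstar, by rw [hσ'i, hσ'j]; exact hxy.symm, rfl⟩
    -- counting
    set c0 := t jstar with hc0
    have hsub : (Finset.univ.filter fun i : A => util G t v i = 0) ⊆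
        (Finset.univ.filter fun i : A => t i = c0) := by
      intro i hi
      simp only [Finset.mem_filter, Finset.mem_univ, true_and] at hi ⊢
      exact hzero i hi
    have htc : typeCount t c0 = (Finset.univ.filter fun i : A => t i = c0).card := by
      rw [typeCount, Set.ncard_eq_toFinset_card']
      congr 1
      ext i
      simp
    have hz_le : (Finset.univ.filter fun i : A => util G t v i = 0).card ≤ typeCount t c0 := by
      rw [htc]; exact Finset.card_le_card hsub
    have hnz_le : (Finset.univ.filter fun i : A => ¬ util G t v i = 0).card ≤
        socialWelfare G t v := by
      rw [socialWelfare]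
      calc (Finset.univ.filter fun i : A => ¬ util G t v i = 0).card
          = ∑ i ∈ Finset.univ.filter fun i : A => ¬ util G t v i = 0, 1 := by
            simp
        _ ≤ ∑ i ∈ Finset.univ.filter fun i : A => ¬ util G t v i = 0, util G t v i := by
            apply Finset.sum_le_sum
            intro i hi
            simp only [Finset.mem_filter] at hi
            omega
        _ ≤ ∑ i : A, util G t v i :=
            Finset.sum_le_sum_of_subset (Finset.filter_subset _ _)
    have hsplit : (Finset.univ.filter fun i : A => util G t v i = 0).card +
        (Finset.univ.filter fun i : A => ¬ util G t v i = 0).card = Fintype.card A := by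
      rw [Finset.card_filter_add_card_filter_not]
      rfl
    have hnT := hsym c0
    have key : Fintype.card A - typeCount t c0 ≤ socialWelfare G t v := by omega
    have e1 : Fintype.card A * (Fintype.card T - 1) =
        Fintype.card T * (Fintype.card A - typeCount t c0) := by
      rw [Nat.mul_sub, Nat.mul_sub, ← hnT, mul_one, mul_comm]
    rw [e1]
    exact Nat.mul_le_mul_left _ key
  refine ⟨hEq, hSW2, ?_⟩
  intro v hv w
  calc (Fintype.card T - 1) * socialWelfare G t w
      ≤ (Fintype.card T - 1) * (2 * Fintype.card A) :=
        Nat.mul_le_mul_left _ (hSW2 w)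
    _ = 2 * (Fintype.card A * (Fintype.card T - 1)) := by ring
    _ ≤ 2 * (Fintype.card T * socialWelfare G t v) :=
        Nat.mul_le_mul_left _ (hEq v hv)
    _ = 2 * Fintype.card T * socialWelfare G t v := by ring
end
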